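/- arXiv:1908.09971 — 8 statements merged into one kernel-verified Lean document; each statement's English description precedes it below -/
import Mathlib

section
/- Let $M=(E,r)$ be a polymatroid and let $X$, $C$, $D$ be pairwise disjoint subsets of $E$. Then $\lambda_{M\backslash D/C}(X) = \lambda_M(X)$ holds if and only if $r(X \cup C) = r(X) + r(C)$ and $r(E-X) + r(E-D) = r(E) + r(E-(X \cup D))$. -/
/-- Characterization of when the connectivity function is preserved in a minor M\D/C. -/
theorem lambda_minor_eq_iff {α : Type*} [DecidableEq α] (E : Finset α) (r : Finset α → ℤ)
    (hr0 : r ∅ = 0)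
    (hmono : ∀ X Y : Finset α, X ⊆ Y → r X ≤ r Y)
    (hsub : ∀ X Y : Finset α, r (X ∪ Y) + r (X ∩ Y) ≤ r X + r Y)
    (X C D : Finset α) (hX : X ⊆ E) (hC : C ⊆ E) (hD : D ⊆ E)
    (hXC : Disjoint X C) (hXD : Disjoint X D) (hCD : Disjoint C D) :
    ((r (X ∪ C) - r C) + (r (((E \ (C ∪ D)) \ X) ∪ C) - r C)
        - (r ((E \ (C ∪ D)) ∪ C) - r C)
      = r X + r (E \ X) - r E)
    ↔ (r (X ∪ C) = r X + r C ∧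
        r (E \ X) + r (E \ D) = r E + r (E \ (X ∪ D))) := by
  have hXC' := Finset.disjoint_left.mp hXC
  have hCD' := Finset.disjoint_left.mp hCD
  have hXD' := Finset.disjoint_left.mp hXD
  have h1 : ((E \ (C ∪ D)) \ X) ∪ C = E \ (X ∪ D) := by
    ext a
    simp only [Finset.mem_union, Finset.mem_sdiff, Finset.mem_union]
    constructor
    · rintro (⟨⟨ha, hcd⟩, hx⟩ | hc)
      · exact ⟨ha, by tauto⟩
      · exact ⟨hC hc, fun h => h.elim (fun hx => hXC' hx hc) (fun hd => hCD' hc hd)⟩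
    · rintro ⟨ha, hxd⟩
      by_cases hc : a ∈ C
      · exact Or.inr hc
      · exact Or.inl ⟨⟨ha, by tauto⟩, by tauto⟩
  have h2 : (E \ (C ∪ D)) ∪ C = E \ D := by
    ext a
    simp only [Finset.mem_union, Finset.mem_sdiff, Finset.mem_union]
    constructor
    · rintro (⟨ha, hcd⟩ | hc)
      · exact ⟨ha, by tauto⟩
      · exact ⟨hC hc, fun hd => hCD' hc hd⟩
    · rintro ⟨ha, hd⟩
      by_cases hc : a ∈ C
      · exact Or.inr hc
      · exact Or.inl ⟨ha, by tauto⟩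
  have ha : r (X ∪ C) ≤ r X + r C := by
    have := hsub X C
    rwa [Finset.disjoint_iff_inter_eq_empty.mp hXC, hr0, add_zero] at this
  have hb : r E + r (E \ (X ∪ D)) ≤ r (E \ X) + r (E \ D) := by
    have h3 : (E \ X) ∪ (E \ D) = E := by
      ext a
      simp only [Finset.mem_union, Finset.mem_sdiff]
      constructor
      · rintro (⟨ha, _⟩ | ⟨ha, _⟩) <;> exact ha
      · intro ha
        by_cases hx : a ∈ X
        · exact Or.inr ⟨ha, fun hd => hXD' hx hd⟩
        · exact Or.inl ⟨ha, hx⟩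
    have h4 : (E \ X) ∩ (E \ D) = E \ (X ∪ D) := by
      ext a
      simp only [Finset.mem_inter, Finset.mem_sdiff, Finset.mem_union]
      tauto
    have := hsub (E \ X) (E \ D)
    rw [h3, h4] at this
    linarith
  rw [h1, h2]
  constructor
  · intro h
    constructor <;> omega
  · rintro ⟨e1, e2⟩
    omega
end

section
/- Let $M$ be a connected $2$-polymatroid and let $N$ be a connected minor of $M$ with $N \neq M$. Then there is an element $e \in E(M) - E(N)$ such that $M\backslash e$ or $M/e$ is connected and has $N$ as a minor. -/
/-- Connectivity of a polymatroid with rank function `r` and ground set `F`. -/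
def Conn {α : Type*} [DecidableEq α] (r : Finset α → ℤ) (F : Finset α) : Prop :=
  ∀ X ⊆ F, X ≠ ∅ → X ≠ F → r X + r (F \ X) ≠ r F

/-- `(F, s)` is a minor of the polymatroid `(E, r)`: it is obtained by contracting a set
`C` and deleting a set `D`. -/
def IsMinor {α : Type*} [DecidableEq α] (r : Finset α → ℤ) (E : Finset α)
    (s : Finset α → ℤ) (F : Finset α) : Prop :=
  ∃ C D : Finset α, C ⊆ E ∧ D ⊆ E ∧ Disjoint C D ∧ F = E \ (C ∪ D) ∧
    ∀ X ⊆ F, s X = r (X ∪ C) - r C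

/-!
Write `M = (E, r)` and `N = (F, s)`, and call a separation `(Z, W)` of `M \ g` or `M / g` with
`F ⊆ W` an obstruction at `g` if `N` is still a minor of that single-element minor.

If there is no obstruction, take any `e ∈ E - F` such that `N` is a minor of `M \ e` or `M / e`:
a separation of that minor would have `F` on one side, since `N` is connected and local
connectivity does not grow under taking minors, so it would be an obstruction.

Otherwise take an obstruction with `|Z|` minimal. The 2-polymatroid dual
`X ↦ 2|X| + r(E - X) - r(E)` exchanges deletion and contraction, so we may assume it lives in
`M \ g`. For `x ∈ Z`, `N` is a minor of `M / x` because `Z` is skew to `W ⊇ F`. If `(S, T)`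
separates `M / x` with `g ∈ T`, then either `Z ∩ S = ∅`, so `S ⊆ W` is skew to `x` and
`(S, T ∪ {x})` separates `M`, or uncrossing with `(Z, W)` makes `Z ∩ S` the small side of an
obstruction at `x`, contradicting minimality.
-/

open Finset

namespace Polymatroid

variable {α : Type*} [DecidableEq α]

structure IsPolymatroid (r : Finset α → ℤ) : Prop where
  rank_empty : r ∅ = 0
  mono : ∀ X Y : Finset α, X ⊆ Y → r X ≤ r Y
  submod : ∀ X Y : Finset α, r (X ∪ Y) + r (X ∩ Y) ≤ r X + r Y

def localConn (r : Finset α → ℤ) (A B : Finset α) : ℤ := r A + r B - r (A ∪ B)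

def contract (r : Finset α → ℤ) (C X : Finset α) : ℤ := r (X ∪ C) - r C

def dual (G : Finset α) (r : Finset α → ℤ) (X : Finset α) : ℤ := 2 * #X + r (G \ X) - r G

structure IsSeparation (r : Finset α → ℤ) (G Z W : Finset α) : Prop where
  union_eq : Z ∪ W = G
  disjoint : Disjoint Z W
  left_nonempty : Z.Nonempty
  right_nonempty : W.Nonempty
  localConn_eq_zero : localConn r Z W = 0

def IsObstruction (r : Finset α → ℤ) (G : Finset α) (s : Finset α → ℤ)
    (F Z W : Finset α) : Prop :=
  IsSeparation r G Z W ∧ F ⊆ W ∧ IsMinor r G s F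

def IsObstructionAt (r s : Finset α → ℤ) (E F : Finset α) (g : α) (Z W : Finset α) : Prop :=
  g ∈ E ∧ (IsObstruction r (E \ {g}) s F Z W ∨
    IsObstruction (contract r {g}) (E \ {g}) s F Z W)

section Rank

variable {r : Finset α → ℤ}

lemma localConn_comm (r : Finset α → ℤ) (A B : Finset α) :
    localConn r A B = localConn r B A := by
  rw [localConn, localConn, union_comm]; ring

lemma contract_contract (r : Finset α → ℤ) (P K : Finset α) :
    contract (contract r P) K = contract r (K ∪ P) := by
  funext X; simp only [contract, union_assoc]; ring

lemma localConn_union_right_eq (r : Finset α → ℤ) (S T P : Finset α) :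
    localConn r S (T ∪ P) = localConn (contract r P) S T + localConn r S P := by
  simp only [localConn, contract, union_assoc]; ring

namespace IsPolymatroid

lemma nonneg (hr : IsPolymatroid r) (X : Finset α) : 0 ≤ r X :=
  hr.rank_empty ▸ hr.mono ∅ X (empty_subset X)

lemma union_le (hr : IsPolymatroid r) (X Y : Finset α) : r (X ∪ Y) ≤ r X + r Y := by
  linarith [hr.submod X Y, hr.nonneg (X ∩ Y)]

lemma union_add_le (hr : IsPolymatroid r) (A : Finset α) {B C : Finset α} (hBC : B ⊆ C) :
    r (A ∪ C) + r B ≤ r (A ∪ B) + r C := by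
  have hsub := hr.submod (A ∪ B) C
  rw [union_assoc, union_eq_right.2 hBC] at hsub
  linarith [hr.mono B ((A ∪ B) ∩ C) (subset_inter subset_union_right hBC)]

lemma contract (hr : IsPolymatroid r) (C : Finset α) : IsPolymatroid (contract r C) where
  rank_empty := by simp [Polymatroid.contract]
  mono X Y hXY := by
    simpa [Polymatroid.contract] using hr.mono _ _ (union_subset_union_left hXY)
  submod X Y := by
    have hsub := hr.submod (X ∪ C) (Y ∪ C)
    rw [← union_union_distrib_right, ← inter_union_distrib_right] at hsub
    simp only [Polymatroid.contract]
    linarith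

lemma rank_union_le_add_card (hr : IsPolymatroid r) {G : Finset α} (hr2 : ∀ e ∈ G, r {e} ≤ 2)
    {B : Finset α} (hB : B ⊆ G) (A : Finset α) : r (A ∪ B) ≤ r A + 2 * #B := by
  induction B using Finset.induction_on generalizing A with
  | empty => simp
  | @insert b B hbB ih =>
    have hAB : A ∪ insert b B = (A ∪ B) ∪ {b} := by grind
    rw [hAB, card_insert_of_notMem hbB]
    push_cast
    linarith [hr.union_le (A ∪ B) {b}, ih (insert_subset_iff.1 hB).2 A,
      hr2 b (insert_subset_iff.1 hB).1]

lemma dual (hr : IsPolymatroid r) {G : Finset α} (hr2 : ∀ e ∈ G, r {e} ≤ 2) :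
    IsPolymatroid (dual G r) where
  rank_empty := by simp [Polymatroid.dual]
  mono X Y hXY := by
    have hGX : G \ X = (G \ Y) ∪ ((G \ X) \ (G \ Y)) :=
      (union_sdiff_of_subset (sdiff_subset_sdiff subset_rfl hXY)).symm
    have hcard : #((G \ X) \ (G \ Y)) ≤ #(Y \ X) := card_le_card (by grind)
    have hY := card_sdiff_add_card_eq_card hXY
    have hrank := hr.rank_union_le_add_card hr2
      (sdiff_subset.trans sdiff_subset : (G \ X) \ (G \ Y) ⊆ G) (G \ Y)
    rw [← hGX] at hrank
    simp only [Polymatroid.dual]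
    omega
  submod X Y := by
    have hsub := hr.submod (G \ X) (G \ Y)
    rw [← sdiff_inter_distrib_right, ← sdiff_union_distrib] at hsub
    have hcard := card_union_add_card_inter X Y
    simp only [Polymatroid.dual]
    omega

lemma localConn_nonneg (hr : IsPolymatroid r) (A B : Finset α) : 0 ≤ localConn r A B := by
  simp only [localConn]; linarith [hr.union_le A B]

lemma localConn_mono (hr : IsPolymatroid r) {A A' B B' : Finset α} (hA : A ⊆ A')
    (hB : B ⊆ B') : localConn r A B ≤ localConn r A' B' := by
  have h1 := hr.union_add_le A hB
  have h2 := hr.union_add_le B' hA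
  simp only [localConn]
  rw [union_comm B' A, union_comm B' A'] at h2
  linarith

lemma localConn_eq_zero_of_subset (hr : IsPolymatroid r) {A A' B B' : Finset α}
    (h : localConn r A' B' = 0) (hA : A ⊆ A') (hB : B ⊆ B') : localConn r A B = 0 :=
  le_antisymm (h ▸ hr.localConn_mono hA hB) (hr.localConn_nonneg A B)

lemma localConn_union_right_le (hr : IsPolymatroid r) (A S T : Finset α) :
    localConn r A (S ∪ T) ≤ localConn r A S + localConn r (A ∪ S) T := by
  simp only [localConn, ← union_assoc]
  linarith [hr.union_le S T]

lemma localConn_contract_le (hr : IsPolymatroid r) (A B C₁ C₂ : Finset α) :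
    localConn (Polymatroid.contract r (C₁ ∪ C₂)) A B ≤
      localConn r (A ∪ C₁) (B ∪ C₂) := by
  have hA := hr.union_add_le A (subset_union_left : C₁ ⊆ C₁ ∪ C₂)
  have hB := hr.union_add_le B (subset_union_right : C₂ ⊆ C₁ ∪ C₂)
  have hABC : A ∪ C₁ ∪ (B ∪ C₂) = A ∪ B ∪ (C₁ ∪ C₂) := by grind
  simp only [localConn, Polymatroid.contract, hABC]
  linarith [hr.union_le C₁ C₂]

end IsPolymatroid

end Rank

section Separation

variable {r r₁ r₂ : Finset α → ℤ} {G Z W : Finset α}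

namespace IsSeparation

lemma symm (h : IsSeparation r G Z W) : IsSeparation r G W Z where
  union_eq := union_comm W Z ▸ h.union_eq
  disjoint := h.disjoint.symm
  left_nonempty := h.right_nonempty
  right_nonempty := h.left_nonempty
  localConn_eq_zero := localConn_comm r W Z ▸ h.localConn_eq_zero

lemma left_subset (h : IsSeparation r G Z W) : Z ⊆ G := h.union_eq ▸ subset_union_left

lemma right_subset (h : IsSeparation r G Z W) : W ⊆ G := h.union_eq ▸ subset_union_right

lemma of_contract {P S T : Finset α} (h : IsSeparation (contract r P) G S T)
    (hSP : Disjoint S P) (hskew : localConn r S P = 0) :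
    IsSeparation r (G ∪ P) S (T ∪ P) where
  union_eq := by rw [← h.union_eq, union_assoc]
  disjoint := disjoint_union_right.2 ⟨h.disjoint, hSP⟩
  left_nonempty := h.left_nonempty
  right_nonempty := h.right_nonempty.mono subset_union_left
  localConn_eq_zero := by rw [localConn_union_right_eq, h.localConn_eq_zero, hskew, add_zero]

end IsSeparation

lemma not_conn_iff_exists_isSeparation : ¬ Conn r G ↔ ∃ Z W, IsSeparation r G Z W := by
  constructor
  · intro h
    simp only [Conn, not_forall, not_not] at h
    obtain ⟨X, hXG, hX, hXG', hrX⟩ := h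
    refine ⟨X, G \ X, union_sdiff_of_subset hXG, disjoint_sdiff, nonempty_iff_ne_empty.2 hX,
      sdiff_nonempty.2 fun h => hXG' (subset_antisymm hXG h), ?_⟩
    rw [localConn, union_sdiff_of_subset hXG, hrX, sub_self]
  · rintro ⟨Z, W, h⟩ hG
    have hW : G \ Z = W := by
      rw [← h.union_eq, union_sdiff_left, h.disjoint.symm.sdiff_eq_left]
    refine hG Z h.left_subset (nonempty_iff_ne_empty.1 h.left_nonempty) (fun hZ => ?_) ?_
    · rw [hZ, sdiff_self] at hW
      exact h.right_nonempty.ne_empty hW.symm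
    · have hzero := h.localConn_eq_zero
      rw [localConn, h.union_eq] at hzero
      rw [hW]
      linarith

lemma _root_.Conn.not_isSeparation (h : Conn r G) : ¬ IsSeparation r G Z W :=
  fun hs => not_conn_iff_exists_isSeparation.2 ⟨Z, W, hs⟩ h

lemma isSeparation_congr (h : ∀ X ⊆ G, r₁ X = r₂ X) :
    IsSeparation r₁ G Z W ↔ IsSeparation r₂ G Z W := by
  constructor <;> intro hs <;> refine ⟨hs.union_eq, hs.disjoint, hs.left_nonempty,
    hs.right_nonempty, ?_⟩ <;> rw [← hs.localConn_eq_zero] <;>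
    simp only [localConn, hs.union_eq, h Z hs.left_subset, h W hs.right_subset, h G subset_rfl]

lemma conn_congr (h : ∀ X ⊆ G, r₁ X = r₂ X) : Conn r₁ G ↔ Conn r₂ G := by
  rw [← not_iff_not, not_conn_iff_exists_isSeparation, not_conn_iff_exists_isSeparation]
  simp only [isSeparation_congr h]

lemma localConn_dual (hr0 : r ∅ = 0) (hZW : Disjoint Z W) :
    localConn (dual (Z ∪ W) r) Z W = localConn r Z W := by
  have hZ : (Z ∪ W) \ Z = W := by rw [union_sdiff_left, hZW.symm.sdiff_eq_left]
  have hW : (Z ∪ W) \ W = Z := by rw [union_sdiff_right, hZW.sdiff_eq_left]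
  simp only [localConn, dual, hZ, hW, Finset.sdiff_self, hr0, card_union_of_disjoint hZW]
  push_cast
  ring

lemma isSeparation_dual_iff (hr0 : r ∅ = 0) :
    IsSeparation (dual G r) G Z W ↔ IsSeparation r G Z W := by
  constructor <;> intro hs <;> refine ⟨hs.union_eq, hs.disjoint, hs.left_nonempty,
    hs.right_nonempty, ?_⟩ <;>
    rw [← hs.localConn_eq_zero, ← hs.union_eq, localConn_dual hr0 hs.disjoint]

lemma conn_dual_iff (hr0 : r ∅ = 0) : Conn (dual G r) G ↔ Conn r G := by
  rw [← not_iff_not, not_conn_iff_exists_isSeparation, not_conn_iff_exists_isSeparation]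
  simp only [isSeparation_dual_iff hr0]

end Separation

section Minor

variable {r r₁ r₂ s s₁ s₂ : Finset α → ℤ} {E G F : Finset α}

lemma _root_.IsMinor.subset (h : IsMinor r G s F) : F ⊆ G := by
  obtain ⟨C, D, -, -, -, rfl, -⟩ := h
  exact sdiff_subset

lemma _root_.IsMinor.rank_empty (h : IsMinor r G s F) : s ∅ = 0 := by
  obtain ⟨C, D, -, -, -, -, hs⟩ := h
  rw [hs ∅ (empty_subset F), empty_union, sub_self]

lemma isMinor_of_contract {K : Finset α} (hK : K ⊆ G) (hF : F ⊆ G) (hFK : Disjoint F K)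
    (hs : ∀ T ⊆ F, s T = contract r K T) : IsMinor r G s F :=
  ⟨K, G \ (F ∪ K), hK, sdiff_subset, disjoint_sdiff.mono_left subset_union_right,
    by grind [disjoint_left], hs⟩

lemma isMinor_congr (hr : ∀ X ⊆ G, r₁ X = r₂ X) (hs : ∀ X ⊆ F, s₁ X = s₂ X) :
    IsMinor r₁ G s₁ F ↔ IsMinor r₂ G s₂ F := by
  constructor <;> rintro ⟨C, D, hC, hD, hCD, rfl, hsC⟩ <;>
    refine ⟨C, D, hC, hD, hCD, rfl, fun T hT => ?_⟩ <;>
    have hTC : T ∪ C ⊆ G := union_subset (hT.trans sdiff_subset) hC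
  · rw [← hs T hT, hsC T hT, hr _ hTC, hr C hC]
  · rw [hs T hT, hsC T hT, hr _ hTC, hr C hC]

lemma _root_.IsMinor.dual (h : IsMinor r G s F) : IsMinor (dual G r) G (dual F s) F := by
  obtain ⟨C, D, hC, hD, hCD, rfl, hs⟩ := h
  refine ⟨D, C, hD, hC, hCD.symm, by rw [union_comm], fun T hT => ?_⟩
  have hTD : G \ (T ∪ D) = (G \ (C ∪ D)) \ T ∪ C := by grind [disjoint_left]
  have hD' : G \ D = G \ (C ∪ D) ∪ C := by grind [disjoint_left]
  have hcard : #(T ∪ D) = #T + #D := card_union_of_disjoint (by grind [disjoint_left])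
  simp only [Polymatroid.dual, hTD, hD', hcard, hs _ sdiff_subset, hs _ subset_rfl]
  push_cast
  ring

lemma dual_dual (hr0 : r ∅ = 0) {X : Finset α} (hX : X ⊆ G) : dual G (dual G r) X = r X := by
  have hcard := card_sdiff_add_card_eq_card hX
  simp only [dual, Finset.sdiff_sdiff_eq_self hX, Finset.sdiff_self, hr0]
  omega

lemma isMinor_dual_iff (hr0 : r ∅ = 0) (hs0 : s ∅ = 0) :
    IsMinor (dual G r) G (dual F s) F ↔ IsMinor r G s F :=
  ⟨fun h => (isMinor_congr (fun _ => dual_dual hr0) (fun _ => dual_dual hs0)).1 h.dual,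
    IsMinor.dual⟩

lemma contract_dual {x : α} {X : Finset α} (hxX : x ∉ X) :
    contract (dual E r) {x} X = dual (E \ {x}) r X := by
  have hcard : #(X ∪ {x}) = #X + 1 := by
    rw [card_union_of_disjoint (disjoint_singleton_right.2 hxX), card_singleton]
  have hEX : E \ (X ∪ {x}) = (E \ {x}) \ X := by grind
  simp only [contract, dual, hcard, card_singleton, hEX]
  push_cast
  ring

lemma dual_contract {x : α} {X : Finset α} (hxE : x ∈ E) (hxX : x ∉ X) :
    dual (E \ {x}) (contract r {x}) X = dual E r X := by
  have hEX : (E \ {x}) \ X ∪ {x} = E \ X := by grind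
  simp only [dual, contract, hEX, sdiff_union_of_subset (singleton_subset_iff.2 hxE)]
  ring

lemma _root_.IsMinor.exists_delete_or_contract (hm : IsMinor r E s F) (hFE : F ≠ E) :
    ∃ e ∈ E \ F, IsMinor r (E \ {e}) s F ∨ IsMinor (contract r {e}) (E \ {e}) s F := by
  have hFsub := hm.subset
  obtain ⟨C, D, hC, hD, hCD, rfl, hs⟩ := hm
  obtain ⟨e, heE, heF⟩ := not_subset.1 fun h => hFE (subset_antisymm hFsub h)
  have hFe : E \ (C ∪ D) ⊆ E \ {e} := by grind
  refine ⟨e, mem_sdiff.2 ⟨heE, heF⟩, ?_⟩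
  rcases mem_union.1 (by grind : e ∈ C ∪ D) with heC | heD
  · refine Or.inr (isMinor_of_contract (K := C.erase e) (by grind) hFe (by grind [disjoint_left])
      fun T hT => ?_)
    rw [contract_contract, union_singleton, insert_erase heC]
    exact hs T hT
  · exact Or.inl (isMinor_of_contract (by grind [disjoint_left]) hFe (by grind [disjoint_left]) hs)

end Minor

section Obstruction

variable {r r₁ r₂ s : Finset α → ℤ} {E G F Z W : Finset α}

lemma IsPolymatroid.contract_union_of_skew (hr : IsPolymatroid r) {Q K T : Finset α}
    (hQ : localConn r Q W = 0) (hK : K ⊆ W) (hT : T ⊆ W) :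
    Polymatroid.contract r (K ∪ Q) T = Polymatroid.contract r K T := by
  have hTK := hr.localConn_eq_zero_of_subset hQ subset_rfl (union_subset hT hK)
  have hK' := hr.localConn_eq_zero_of_subset hQ subset_rfl hK
  rw [localConn, union_comm Q] at hTK hK'
  simp only [Polymatroid.contract, ← union_assoc]
  linarith

lemma _root_.IsMinor.contract_of_skew (hm : IsMinor r G s F) (hr : IsPolymatroid r)
    (hG : G ⊆ Z ∪ W) (hZW : localConn r Z W = 0) (hFW : F ⊆ W) {P H : Finset α}
    (hP : localConn r P W = 0) (hWH : W ⊆ H) : IsMinor (contract r P) H s F := by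
  obtain ⟨C, D, hC, -, -, rfl, hs⟩ := hm
  -- `C \ W ⊆ Z` is skew to `W`, so contracting `C ∩ W` alone already gives `(F, s)`.
  have hQ : localConn r (C \ W) W = 0 :=
    hr.localConn_eq_zero_of_subset hZW (by grind) subset_rfl
  refine isMinor_of_contract (K := C ∩ W) (inter_subset_right.trans hWH) (hFW.trans hWH)
    (by grind [disjoint_left]) fun T hT => ?_
  have hTW := hT.trans hFW
  have hC' : C ∩ W ∪ C \ W = C := by rw [union_comm, sdiff_union_inter]
  calc s T = contract r (C ∩ W ∪ C \ W) T := by rw [hC']; exact hs T hT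
    _ = contract r (C ∩ W) T := hr.contract_union_of_skew hQ inter_subset_right hTW
    _ = contract r (C ∩ W ∪ P) T := (hr.contract_union_of_skew hP inter_subset_right hTW).symm
    _ = contract (contract r P) (C ∩ W) T := by rw [contract_contract]

lemma _root_.IsMinor.localConn_nonneg (hm : IsMinor r G s F) (hr : IsPolymatroid r)
    {A B : Finset α} (hA : A ⊆ F) (hB : B ⊆ F) : 0 ≤ localConn s A B := by
  obtain ⟨C, D, -, -, -, -, hs⟩ := hm
  have hs' : ∀ X ⊆ F, s X = contract r C X := hs
  have := (hr.contract C).localConn_nonneg A B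
  rwa [localConn, ← hs' A hA, ← hs' B hB, ← hs' _ (union_subset hA hB)] at this

lemma _root_.IsMinor.localConn_le (hm : IsMinor r G s F) (hr : IsPolymatroid r)
    (hG : G ⊆ Z ∪ W) : localConn s (F ∩ Z) (F ∩ W) ≤ localConn r Z W := by
  obtain ⟨C, D, hC, -, -, -, hs⟩ := hm
  have hCW : C \ Z ⊆ W := fun a ha =>
    (mem_union.1 (hG (hC (mem_sdiff.1 ha).1))).resolve_left (mem_sdiff.1 ha).2
  have hsC : ∀ X ⊆ F, s X = contract r (C ∩ Z ∪ C \ Z) X := by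
    rwa [union_comm, sdiff_union_inter]
  calc localConn s (F ∩ Z) (F ∩ W)
      = localConn (contract r (C ∩ Z ∪ C \ Z)) (F ∩ Z) (F ∩ W) := by
        simp only [localConn, hsC _ inter_subset_left,
          hsC _ (union_subset inter_subset_left inter_subset_left)]
    _ ≤ localConn r (F ∩ Z ∪ C ∩ Z) (F ∩ W ∪ C \ Z) := hr.localConn_contract_le _ _ _ _
    _ ≤ localConn r Z W := hr.localConn_mono
      (union_subset inter_subset_right inter_subset_right) (union_subset inter_subset_right hCW)

lemma _root_.IsMinor.subset_or_subset_of_isSeparation (hm : IsMinor r G s F)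
    (hr : IsPolymatroid r) (hN : Conn s F) (h : IsSeparation r G Z W) : F ⊆ Z ∨ F ⊆ W := by
  have hFG := hm.subset
  rw [← h.union_eq] at hFG
  by_contra! hF
  obtain ⟨a, haF, haZ⟩ := not_subset.1 hF.1
  obtain ⟨b, hbF, hbW⟩ := not_subset.1 hF.2
  refine hN.not_isSeparation (Z := F ∩ Z) (W := F ∩ W)
    ⟨by grind, h.disjoint.mono inter_subset_right inter_subset_right,
      ⟨b, by grind⟩, ⟨a, by grind⟩, le_antisymm ?_ ?_⟩
  · exact h.localConn_eq_zero ▸ hm.localConn_le hr h.union_eq.ge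
  · exact hm.localConn_nonneg hr inter_subset_left inter_subset_left

lemma exists_isObstruction_of_not_conn (hm : IsMinor r G s F) (hr : IsPolymatroid r)
    (hN : Conn s F) (hG : ¬ Conn r G) : ∃ Z W, IsObstruction r G s F Z W := by
  obtain ⟨Z, W, h⟩ := not_conn_iff_exists_isSeparation.1 hG
  rcases hm.subset_or_subset_of_isSeparation hr hN h with hFZ | hFW
  · exact ⟨W, Z, h.symm, hFZ, hm⟩
  · exact ⟨Z, W, h, hFW, hm⟩

lemma isObstruction_congr (h : ∀ X ⊆ G, r₁ X = r₂ X) :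
    IsObstruction r₁ G s F Z W ↔ IsObstruction r₂ G s F Z W := by
  simp only [IsObstruction, isSeparation_congr h,
    isMinor_congr h (fun _ _ => rfl : ∀ X ⊆ F, s X = s X)]

lemma isObstruction_dual_iff (hr0 : r ∅ = 0) (hs0 : s ∅ = 0) :
    IsObstruction (dual G r) G (dual F s) F Z W ↔ IsObstruction r G s F Z W := by
  simp only [IsObstruction, isSeparation_dual_iff hr0, isMinor_dual_iff hr0 hs0]

lemma isObstruction_dual_delete_iff {g : α} (hg : g ∈ E) (hs0 : s ∅ = 0) :
    IsObstruction (dual E r) (E \ {g}) (dual F s) F Z W ↔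
      IsObstruction (contract r {g}) (E \ {g}) s F Z W := by
  rw [← isObstruction_dual_iff (by simp [contract]) hs0]
  exact isObstruction_congr fun X hX => (dual_contract hg fun hgX => by grind).symm

lemma isObstruction_dual_contract_iff {g : α} (hr0 : r ∅ = 0) (hs0 : s ∅ = 0) :
    IsObstruction (contract (dual E r) {g}) (E \ {g}) (dual F s) F Z W ↔
      IsObstruction r (E \ {g}) s F Z W := by
  rw [← isObstruction_dual_iff hr0 hs0]
  exact isObstruction_congr fun X hX => contract_dual fun hgX => by grind

lemma isObstructionAt_dual_iff {g : α} (hr0 : r ∅ = 0) (hs0 : s ∅ = 0) :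
    IsObstructionAt (dual E r) (dual F s) E F g Z W ↔ IsObstructionAt r s E F g Z W :=
  and_congr_right fun hg => by
    rw [isObstruction_dual_delete_iff hg hs0, isObstruction_dual_contract_iff hr0 hs0, or_comm]

end Obstruction

section Splitter

variable {r s : Finset α → ℤ} {E F G Z W : Finset α} {g x : α}

lemma IsSeparation.uncross {P S T : Finset α} (h : IsSeparation (contract r P) G S T)
    (hr : IsPolymatroid r) (hZW : localConn r Z W = 0) (hP : P ⊆ Z) (hB : (Z ∩ S).Nonempty)
    (hSW : S \ (Z ∩ S) ⊆ W) :
    IsSeparation (contract r P) G (Z ∩ S) (S \ (Z ∩ S) ∪ T) where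
  union_eq := by rw [← union_assoc, union_sdiff_of_subset inter_subset_right, h.union_eq]
  disjoint := disjoint_union_right.2 ⟨disjoint_sdiff, h.disjoint.mono_left inter_subset_right⟩
  left_nonempty := hB
  right_nonempty := h.right_nonempty.mono subset_union_right
  localConn_eq_zero := by
    refine le_antisymm ?_ ((hr.contract P).localConn_nonneg _ _)
    have hsplit := (hr.contract P).localConn_union_right_le (Z ∩ S) (S \ (Z ∩ S)) T
    rw [union_sdiff_of_subset inter_subset_right] at hsplit
    have hcontract := hr.localConn_contract_le (Z ∩ S) (S \ (Z ∩ S)) P ∅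
    rw [union_empty, union_empty] at hcontract
    have hskew : localConn r (Z ∩ S ∪ P) (S \ (Z ∩ S)) = 0 :=
      hr.localConn_eq_zero_of_subset hZW (union_subset inter_subset_left hP) hSW
    linarith [h.localConn_eq_zero]

lemma conn_contract_of_minimal (hr : IsPolymatroid r) (hM : Conn r E) (hg : g ∈ E)
    (hZW : IsSeparation r (E \ {g}) Z W) (hFW : F ⊆ W) (hx : x ∈ Z)
    (hmin : ∀ Z' W', IsSeparation (contract r {x}) (E \ {x}) Z' W' → F ⊆ W' → #Z ≤ #Z') :
    Conn (contract r {x}) (E \ {x}) := by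
  have hmemZW : ∀ a, a ∈ Z ∨ a ∈ W ↔ a ∈ E ∧ a ≠ g := fun a => by
    rw [← mem_union, hZW.union_eq, mem_sdiff, mem_singleton]
  have hZW' := disjoint_left.1 hZW.disjoint
  have hxg : x ≠ g := ((hmemZW x).1 (Or.inl hx)).2
  by_contra hc
  obtain ⟨S, T, hST⟩ := not_conn_iff_exists_isSeparation.1 hc
  wlog hgT : g ∈ T generalizing S T
  · have hgST : g ∈ S ∪ T := by rw [hST.union_eq]; simp [hg, hxg.symm]
    exact this T S hST.symm ((mem_union.1 hgST).resolve_right hgT)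
  have hmemST : ∀ a, a ∈ S ∨ a ∈ T ↔ a ∈ E ∧ a ≠ x := fun a => by
    rw [← mem_union, hST.union_eq, mem_sdiff, mem_singleton]
  have hST' := disjoint_left.1 hST.disjoint
  have hSW : S \ (Z ∩ S) ⊆ W := by grind
  by_cases hB : (Z ∩ S).Nonempty
  · have hsep := hST.uncross hr hZW.localConn_eq_zero (singleton_subset_iff.2 hx) hB hSW
    have hcard : #(Z ∩ S) < #Z := card_lt_card (ssubset_iff_of_subset inter_subset_left |>.2
      ⟨x, hx, by grind⟩)
    have := hmin _ _ hsep (by grind)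
    omega
  · have hskew : localConn r S {x} = 0 :=
      hr.localConn_eq_zero_of_subset (localConn_comm r Z W ▸ hZW.localConn_eq_zero)
        (by grind) (singleton_subset_iff.2 hx)
    have hsep := hST.of_contract (disjoint_singleton_right.2 (by grind)) hskew
    rw [sdiff_union_of_subset (singleton_subset_iff.2 (by grind))] at hsep
    exact hM.not_isSeparation hsep

lemma exists_isObstructionAt_min (h : ∃ g Z W, IsObstructionAt r s E F g Z W) :
    ∃ g Z W, IsObstructionAt r s E F g Z W ∧
      ∀ g' Z' W', IsObstructionAt r s E F g' Z' W' → #Z ≤ #Z' := by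
  classical
  have hex : ∃ n, ∃ g Z W, IsObstructionAt r s E F g Z W ∧ #Z = n :=
    let ⟨g, Z, W, h⟩ := h; ⟨_, g, Z, W, h, rfl⟩
  obtain ⟨g, Z, W, hob, hZ⟩ := Nat.find_spec hex
  exact ⟨g, Z, W, hob, fun g' Z' W' h' => hZ ▸ Nat.find_min' hex ⟨g', Z', W', h', rfl⟩⟩

lemma exists_contract_of_minimal (hr : IsPolymatroid r) (hM : Conn r E) (hg : g ∈ E)
    (hob : IsObstruction r (E \ {g}) s F Z W)
    (hmin : ∀ g' Z' W', IsObstructionAt r s E F g' Z' W' → #Z ≤ #Z') :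
    ∃ x ∈ E \ F,
      Conn (contract r {x}) (E \ {x}) ∧ IsMinor (contract r {x}) (E \ {x}) s F := by
  obtain ⟨hZW, hFW, hm⟩ := hob
  obtain ⟨x, hx⟩ := hZW.left_nonempty
  have hxE : x ∈ E := (mem_sdiff.1 (hZW.left_subset hx)).1
  have hxW : x ∉ W := disjoint_left.1 hZW.disjoint hx
  have hWx : W ⊆ E \ {x} := by have := hZW.right_subset; grind
  have hmx : IsMinor (contract r {x}) (E \ {x}) s F :=
    hm.contract_of_skew hr hZW.union_eq.ge hZW.localConn_eq_zero hFW
      (hr.localConn_eq_zero_of_subset hZW.localConn_eq_zero (singleton_subset_iff.2 hx) subset_rfl)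
      hWx
  refine ⟨x, mem_sdiff.2 ⟨hxE, fun h => hxW (hFW h)⟩,
    conn_contract_of_minimal hr hM hg hZW hFW hx fun Z' W' h hF => ?_, hmx⟩
  exact hmin x Z' W' ⟨hxE, Or.inr ⟨h, hF, hmx⟩⟩

lemma exists_of_forall_not_isObstructionAt (hr : IsPolymatroid r) (hm : IsMinor r E s F)
    (hN : Conn s F) (hFE : F ≠ E) (hob : ∀ g Z W, ¬ IsObstructionAt r s E F g Z W) :
    ∃ e ∈ E \ F, (Conn r (E \ {e}) ∧ IsMinor r (E \ {e}) s F) ∨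
      (Conn (contract r {e}) (E \ {e}) ∧ IsMinor (contract r {e}) (E \ {e}) s F) := by
  obtain ⟨e, he, hdel | hcon⟩ := hm.exists_delete_or_contract hFE
  · refine ⟨e, he, Or.inl ⟨not_not.1 fun hc => ?_, hdel⟩⟩
    obtain ⟨Z, W, h⟩ := exists_isObstruction_of_not_conn hdel hr hN hc
    exact hob e Z W ⟨(mem_sdiff.1 he).1, Or.inl h⟩
  · refine ⟨e, he, Or.inr ⟨not_not.1 fun hc => ?_, hcon⟩⟩
    obtain ⟨Z, W, h⟩ := exists_isObstruction_of_not_conn hcon (hr.contract {e}) hN hc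
    exact hob e Z W ⟨(mem_sdiff.1 he).1, Or.inr h⟩

lemma conn_isMinor_of_contract_dual (hr0 : r ∅ = 0) (hs0 : s ∅ = 0)
    (hconn : Conn (contract (dual E r) {x}) (E \ {x}))
    (hm : IsMinor (contract (dual E r) {x}) (E \ {x}) (dual F s) F) :
    Conn r (E \ {x}) ∧ IsMinor r (E \ {x}) s F := by
  have h : ∀ X ⊆ E \ {x}, contract (dual E r) {x} X = dual (E \ {x}) r X :=
    fun X hX => contract_dual fun hxX => by grind
  exact ⟨(conn_dual_iff hr0).1 ((conn_congr h).1 hconn),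
    (isMinor_dual_iff hr0 hs0).1 ((isMinor_congr h fun _ _ => rfl).1 hm)⟩

end Splitter

end Polymatroid

open Polymatroid in
/-- Main theorem: if `M` is a connected 2-polymatroid with a connected proper minor `N`,
then some `e ∈ E(M) - E(N)` can be deleted or contracted keeping connectivity and
keeping `N` as a minor. -/
theorem splitter_two_polymatroid {α : Type*} [DecidableEq α]
    (E : Finset α) (r : Finset α → ℤ)
    (hr0 : r ∅ = 0)
    (hmono : ∀ X Y : Finset α, X ⊆ Y → r X ≤ r Y)
    (hsub : ∀ X Y : Finset α, r (X ∪ Y) + r (X ∩ Y) ≤ r X + r Y)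
    (hrank2 : ∀ e ∈ E, r {e} ≤ 2)
    (hMconn : Conn r E)
    (F : Finset α) (s : Finset α → ℤ)
    (hminor : IsMinor r E s F)
    (hNconn : Conn s F)
    (hproper : F ≠ E) :
    ∃ e ∈ E \ F,
      (Conn r (E \ {e}) ∧ IsMinor r (E \ {e}) s F) ∨
      (Conn (fun X => r (X ∪ {e}) - r {e}) (E \ {e}) ∧
        IsMinor (fun X => r (X ∪ {e}) - r {e}) (E \ {e}) s F) := by
  have hr : IsPolymatroid r := ⟨hr0, hmono, hsub⟩
  by_cases hob : ∃ g Z W, IsObstructionAt r s E F g Z W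
  · obtain ⟨g, Z, W, ⟨hg, hdel | hcon⟩, hmin⟩ := exists_isObstructionAt_min hob
    · obtain ⟨x, hx, h⟩ := exists_contract_of_minimal hr hMconn hg hdel hmin
      exact ⟨x, hx, Or.inr h⟩
    · have hs0 := hminor.rank_empty
      obtain ⟨x, hx, hconn, hmx⟩ := exists_contract_of_minimal (hr.dual hrank2)
        ((conn_dual_iff hr0).2 hMconn) hg ((isObstruction_dual_delete_iff hg hs0).2 hcon)
        fun g' Z' W' h => hmin g' Z' W' ((isObstructionAt_dual_iff hr0 hs0).1 h)
      exact ⟨x, hx, Or.inl (conn_isMinor_of_contract_dual hr0 hs0 hconn hmx)⟩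
  · simp only [not_exists] at hob
    exact exists_of_forall_not_isObstructionAt hr hminor hNconn hproper hob
end

section
/- Let $M_1 = (E_1, r_1)$ and $M_2 = (E_2, r_2)$ be $k$-polymatroids with $E_1 \cap E_2 = \{p\}$ and $r_1(\{p\}) = r_2(\{p\})$. Define $r$ on subsets $A$ of $E_1 \cup E_2$ by $r(A) = \min\{ r_1(A \cap E_1) + r_2(A \cap E_2),\ r_1((A \cap E_1) \cup \{p\}) + r_2((A \cap E_2) \cup \{p\}) - r_1(\{p\}) \}$. Then $(E_1 \cup E_2, r)$ is a $k$-polymatroid (in particular, $r$ is normalized, monotone, and submodular, with all singletons of rank at most $k$). -/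
section
variable {α : Type*} [DecidableEq α]

private lemma pc_sub2 (r : Finset α → ℤ) (p : α)
    (hsub : ∀ X Y : Finset α, r (X ∪ Y) + r (X ∩ Y) ≤ r X + r Y)
    (X Y : Finset α) :
    r ((X ∪ Y) ∪ {p}) + r ((X ∩ Y) ∪ {p}) ≤ r (X ∪ {p}) + r (Y ∪ {p}) := by
  have h := hsub (X ∪ {p}) (Y ∪ {p})
  have e1 : (X ∪ {p}) ∪ (Y ∪ {p}) = (X ∪ Y) ∪ {p} := by ext x; simp
  have e2 : (X ∪ {p}) ∩ (Y ∪ {p}) = (X ∩ Y) ∪ {p} := by ext x; simp; tauto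
  rw [e1, e2] at h; exact h

private lemma pc_sub3 (r : Finset α → ℤ) (p : α)
    (hmono : ∀ X Y : Finset α, X ⊆ Y → r X ≤ r Y)
    (hsub : ∀ X Y : Finset α, r (X ∪ Y) + r (X ∩ Y) ≤ r X + r Y)
    (X Y : Finset α) :
    r ((X ∪ Y) ∪ {p}) + r (X ∩ Y) ≤ r X + r (Y ∪ {p}) := by
  have h := hsub X (Y ∪ {p})
  have e1 : X ∪ (Y ∪ {p}) = (X ∪ Y) ∪ {p} := (Finset.union_assoc X Y {p}).symm
  have e2 : X ∩ Y ⊆ X ∩ (Y ∪ {p}) := by intro x hx; simp at hx ⊢; tauto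
  rw [e1] at h
  have := hmono _ _ e2
  linarith

end

/-- The parallel connection of two k-polymatroids along a common basepoint `p`
is a k-polymatroid. -/
theorem parallel_connection_polymatroid {α : Type*} [DecidableEq α] (k : ℕ)
    (E1 E2 : Finset α) (r1 r2 : Finset α → ℤ) (p : α)
    (hr10 : r1 ∅ = 0)
    (hmono1 : ∀ X Y : Finset α, X ⊆ Y → r1 X ≤ r1 Y)
    (hsub1 : ∀ X Y : Finset α, r1 (X ∪ Y) + r1 (X ∩ Y) ≤ r1 X + r1 Y)
    (hk1 : ∀ e ∈ E1, r1 {e} ≤ (k : ℤ))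
    (hr20 : r2 ∅ = 0)
    (hmono2 : ∀ X Y : Finset α, X ⊆ Y → r2 X ≤ r2 Y)
    (hsub2 : ∀ X Y : Finset α, r2 (X ∪ Y) + r2 (X ∩ Y) ≤ r2 X + r2 Y)
    (hk2 : ∀ e ∈ E2, r2 {e} ≤ (k : ℤ))
    (hmeet : E1 ∩ E2 = {p})
    (hp : r1 {p} = r2 {p}) :
    (fun A => min (r1 (A ∩ E1) + r2 (A ∩ E2))
        (r1 ((A ∩ E1) ∪ {p}) + r2 ((A ∩ E2) ∪ {p}) - r1 {p})) ∅ = 0 ∧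
    (∀ A B : Finset α, A ⊆ B → B ⊆ E1 ∪ E2 →
      (fun A => min (r1 (A ∩ E1) + r2 (A ∩ E2))
        (r1 ((A ∩ E1) ∪ {p}) + r2 ((A ∩ E2) ∪ {p}) - r1 {p})) A ≤
      (fun A => min (r1 (A ∩ E1) + r2 (A ∩ E2))
        (r1 ((A ∩ E1) ∪ {p}) + r2 ((A ∩ E2) ∪ {p}) - r1 {p})) B) ∧
    (∀ A B : Finset α, A ⊆ E1 ∪ E2 → B ⊆ E1 ∪ E2 →
      (fun A => min (r1 (A ∩ E1) + r2 (A ∩ E2))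
        (r1 ((A ∩ E1) ∪ {p}) + r2 ((A ∩ E2) ∪ {p}) - r1 {p})) (A ∪ B) +
      (fun A => min (r1 (A ∩ E1) + r2 (A ∩ E2))
        (r1 ((A ∩ E1) ∪ {p}) + r2 ((A ∩ E2) ∪ {p}) - r1 {p})) (A ∩ B) ≤
      (fun A => min (r1 (A ∩ E1) + r2 (A ∩ E2))
        (r1 ((A ∩ E1) ∪ {p}) + r2 ((A ∩ E2) ∪ {p}) - r1 {p})) A +
      (fun A => min (r1 (A ∩ E1) + r2 (A ∩ E2))
        (r1 ((A ∩ E1) ∪ {p}) + r2 ((A ∩ E2) ∪ {p}) - r1 {p})) B) ∧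
    (∀ e ∈ E1 ∪ E2,
      (fun A => min (r1 (A ∩ E1) + r2 (A ∩ E2))
        (r1 ((A ∩ E1) ∪ {p}) + r2 ((A ∩ E2) ∪ {p}) - r1 {p})) {e} ≤ (k : ℤ)) := by
  have hpE : p ∈ E1 ∩ E2 := by rw [hmeet]; exact Finset.mem_singleton_self p
  have hpE1 : p ∈ E1 := (Finset.mem_inter.mp hpE).1
  have hpE2 : p ∈ E2 := (Finset.mem_inter.mp hpE).2
  refine ⟨?_, ?_, ?_, ?_⟩
  · -- normalization
    simp only [Finset.empty_inter, Finset.empty_union, hr10, hr20]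
    have h2 : (0:ℤ) ≤ r2 {p} := hr20 ▸ hmono2 ∅ {p} (Finset.empty_subset _)
    omega
  · -- monotone
    intro A B hAB _
    simp only
    apply min_le_min
    · exact add_le_add (hmono1 _ _ (Finset.inter_subset_inter_right hAB))
        (hmono2 _ _ (Finset.inter_subset_inter_right hAB))
    · have h1 := hmono1 ((A ∩ E1) ∪ {p}) ((B ∩ E1) ∪ {p})
        (Finset.union_subset_union (Finset.inter_subset_inter_right hAB) (Finset.Subset.refl {p}))
      have h2 := hmono2 ((A ∩ E2) ∪ {p}) ((B ∩ E2) ∪ {p})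
        (Finset.union_subset_union (Finset.inter_subset_inter_right hAB) (Finset.Subset.refl {p}))
      omega
  · -- submodular
    intro A B _ _
    simp only
    have eU1 : (A ∪ B) ∩ E1 = (A ∩ E1) ∪ (B ∩ E1) := Finset.union_inter_distrib_right A B E1
    have eU2 : (A ∪ B) ∩ E2 = (A ∩ E2) ∪ (B ∩ E2) := Finset.union_inter_distrib_right A B E2
    have eI1 : (A ∩ B) ∩ E1 = (A ∩ E1) ∩ (B ∩ E1) := by ext x; simp
    have eI2 : (A ∩ B) ∩ E2 = (A ∩ E2) ∩ (B ∩ E2) := by ext x; simp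
    rw [eU1, eU2, eI1, eI2]
    set X1 := A ∩ E1; set Y1 := B ∩ E1; set X2 := A ∩ E2; set Y2 := B ∩ E2
    have haa := add_le_add (hsub1 X1 Y1) (hsub2 X2 Y2)
    have hbb := add_le_add (pc_sub2 r1 p hsub1 X1 Y1) (pc_sub2 r2 p hsub2 X2 Y2)
    have hab := add_le_add (pc_sub3 r1 p hmono1 hsub1 X1 Y1) (pc_sub3 r2 p hmono2 hsub2 X2 Y2)
    have hba := add_le_add (pc_sub3 r1 p hmono1 hsub1 Y1 X1) (pc_sub3 r2 p hmono2 hsub2 Y2 X2)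
    have cY1 : Y1 ∪ X1 = X1 ∪ Y1 := Finset.union_comm _ _
    have cY1' : Y1 ∩ X1 = X1 ∩ Y1 := Finset.inter_comm _ _
    have cY2 : Y2 ∪ X2 = X2 ∪ Y2 := Finset.union_comm _ _
    have cY2' : Y2 ∩ X2 = X2 ∩ Y2 := Finset.inter_comm _ _
    rw [cY1, cY1', cY2, cY2'] at hba
    have m1 := min_le_left (r1 (X1 ∪ Y1) + r2 (X2 ∪ Y2))
      (r1 ((X1 ∪ Y1) ∪ {p}) + r2 ((X2 ∪ Y2) ∪ {p}) - r1 {p})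
    have m2 := min_le_right (r1 (X1 ∪ Y1) + r2 (X2 ∪ Y2))
      (r1 ((X1 ∪ Y1) ∪ {p}) + r2 ((X2 ∪ Y2) ∪ {p}) - r1 {p})
    have m3 := min_le_left (r1 (X1 ∩ Y1) + r2 (X2 ∩ Y2))
      (r1 ((X1 ∩ Y1) ∪ {p}) + r2 ((X2 ∩ Y2) ∪ {p}) - r1 {p})
    have m4 := min_le_right (r1 (X1 ∩ Y1) + r2 (X2 ∩ Y2))
      (r1 ((X1 ∩ Y1) ∪ {p}) + r2 ((X2 ∩ Y2) ∪ {p}) - r1 {p})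
    omega
  · -- singletons
    intro e he
    simp only
    by_cases hep : e = p
    · subst hep
      have h1 : ({e} : Finset α) ∩ E1 = {e} := by
        apply Finset.inter_eq_left.mpr; simpa using hpE1
      have h2 : ({e} : Finset α) ∩ E2 = {e} := by
        apply Finset.inter_eq_left.mpr; simpa using hpE2
      rw [h1, h2, Finset.union_self]
      have := hk2 e hpE2
      omega
    · rcases Finset.mem_union.mp he with h1 | h2
      · have hne2 : e ∉ E2 := fun h => hep (by
          have : e ∈ E1 ∩ E2 := Finset.mem_inter.mpr ⟨h1, h⟩
          rw [hmeet] at this; exact Finset.mem_singleton.mp this)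
        have e1 : ({e} : Finset α) ∩ E1 = {e} := Finset.inter_eq_left.mpr (by simpa using h1)
        have e2 : ({e} : Finset α) ∩ E2 = ∅ := by
          ext x; simp; rintro rfl; exact hne2
        rw [e1, e2, hr20]
        have := hk1 e h1
        omega
      · have hne1 : e ∉ E1 := fun h => hep (by
          have : e ∈ E1 ∩ E2 := Finset.mem_inter.mpr ⟨h, h2⟩
          rw [hmeet] at this; exact Finset.mem_singleton.mp this)
        have e1 : ({e} : Finset α) ∩ E1 = ∅ := by
          ext x; simp; rintro rfl; exact hne1
        have e2 : ({e} : Finset α) ∩ E2 = {e} := Finset.inter_eq_left.mpr (by simpa using h2)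
        rw [e1, e2, hr10]
        have := hk2 e h2
        omega
end

section
/- Let $M = (E, r)$ be a $2$-polymatroid with a partition $(X_1, X_2)$ of $E$ such that $r(X_1) + r(X_2) = r(E) + 1$. Define $M_1$ on ground set $X_1 \cup \{p\}$ (where $p \notin E$) by $r_1(A) = r(A)$ if $p \notin A$ and $r_1(A) = r((A - p) \cup X_2) - r(X_2) + 1$ if $p \in A$, and define $M_2$ on $X_2 \cup \{p\}$ symmetrically. Then $M_1$ and $M_2$ are $2$-polymatroids and $M = P(M_1, M_2) \backslash p$, where $P(M_1, M_2)$ is the parallel connection along $p$. -/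
/-!
Put `λ(X₁) = r X₁ + r X₂ - r E`, so the hypothesis is `λ(X₁) = 1`. Submodularity applied to
`X₁` and `A ∪ X₂` gives `r A + r X₂ ≤ r (A ∪ X₂) + 1` for `A ⊆ X₁`, which is exactly monotonicity
of `r₁` across the new element `p`; submodularity of `r₁` is inherited from that of `r`.
For `A ⊆ E` with `Aᵢ = A ∩ Xᵢ`, both terms of the parallel-connection minimum are at least `r A`,
and submodularity for the pairs `(A, X₁)`, `(A, X₂)` bounds their sum by `2 r A + λ(X₁)`; since
`λ(X₁) = 1` and ranks are integers, one of the two terms equals `r A`.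
-/

/-- The rank function of one side of the 2-separation decomposition:
`r1 A = r A` if `p ∉ A`, and `r1 A = r((A - p) ∪ X2) - r X2 + 1` if `p ∈ A`. -/
def sideRank {α : Type*} [DecidableEq α] (r : Finset α → ℤ) (X2 : Finset α) (p : α) :
    Finset α → ℤ :=
  fun A => if p ∈ A then r ((A \ {p}) ∪ X2) - r X2 + 1 else r A

section TwoSeparation

open Finset

variable {α : Type*} [DecidableEq α]

def IsTwoPolymatroid (E : Finset α) (r : Finset α → ℤ) : Prop :=
  r ∅ = 0 ∧
    (∀ A B : Finset α, A ⊆ B → B ⊆ E → r A ≤ r B) ∧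
    (∀ A B : Finset α, A ⊆ E → B ⊆ E → r (A ∪ B) + r (A ∩ B) ≤ r A + r B) ∧
    (∀ e ∈ E, r {e} ≤ 2)

variable {r : Finset α → ℤ}

lemma sideRank_of_notMem {X A : Finset α} {p : α} (h : p ∉ A) : sideRank r X p A = r A :=
  if_neg h

lemma sideRank_of_mem {X A : Finset α} {p : α} (h : p ∈ A) :
    sideRank r X p A = r ((A \ {p}) ∪ X) - r X + 1 :=
  if_pos h

lemma sideRank_union_singleton {X A : Finset α} {p : α} (h : p ∉ A) :
    sideRank r X p (A ∪ {p}) = r (A ∪ X) - r X + 1 := by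
  rw [sideRank_of_mem (by simp), union_sdiff_cancel_right (disjoint_singleton_right.2 h)]

lemma sideRank_singleton_self (X : Finset α) (p : α) : sideRank r X p {p} = 1 := by
  simp [sideRank]

lemma sideRank_singleton_le_two {X₁ X₂ : Finset α} {p : α} (hrank2 : ∀ e ∈ X₁, r {e} ≤ 2) :
    ∀ e ∈ X₁ ∪ {p}, sideRank r X₂ p {e} ≤ 2 := by
  intro e he
  by_cases hep : e = p
  · subst hep
    rw [sideRank_singleton_self]
    omega
  · rw [sideRank_of_notMem (by simpa [eq_comm] using hep)]
    exact hrank2 e (by simpa [hep] using he)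

section Submodular

variable (hmono : ∀ X Y : Finset α, X ⊆ Y → r X ≤ r Y)
  (hsub : ∀ X Y : Finset α, r (X ∪ Y) + r (X ∩ Y) ≤ r X + r Y)
include hmono hsub

lemma add_le_add_of_subset_union_of_subset_inter {X Y S T : Finset α}
    (hS : S ⊆ X ∪ Y) (hT : T ⊆ X ∩ Y) : r S + r T ≤ r X + r Y := by
  linarith [hsub X Y, hmono S (X ∪ Y) hS, hmono T (X ∩ Y) hT]

lemma add_le_rank_union_add_one {X₁ X₂ A : Finset α}
    (hconn : r X₁ + r X₂ ≤ r (X₁ ∪ X₂) + 1) (hA : A ⊆ X₁) :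
    r A + r X₂ ≤ r (A ∪ X₂) + 1 := by
  have := add_le_add_of_subset_union_of_subset_inter hmono hsub (X := X₁) (Y := A ∪ X₂)
    (S := X₁ ∪ X₂) (T := A) (by grind) (by grind)
  linarith

lemma sideRank_mono {X₁ X₂ : Finset α} {p : α} (hconn : r X₁ + r X₂ ≤ r (X₁ ∪ X₂) + 1)
    {A B : Finset α} (hAB : A ⊆ B) (hB : B ⊆ X₁ ∪ {p}) :
    sideRank r X₂ p A ≤ sideRank r X₂ p B := by
  by_cases hpB : p ∈ B
  · rw [sideRank_of_mem hpB]
    by_cases hpA : p ∈ A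
    · rw [sideRank_of_mem hpA]
      linarith [hmono ((A \ {p}) ∪ X₂) ((B \ {p}) ∪ X₂) (by grind)]
    · rw [sideRank_of_notMem hpA]
      have hA : A ⊆ X₁ := by grind
      linarith [add_le_rank_union_add_one hmono hsub hconn hA,
        hmono (A ∪ X₂) ((B \ {p}) ∪ X₂) (by grind)]
  · have hpA : p ∉ A := fun h => hpB (hAB h)
    rw [sideRank_of_notMem hpA, sideRank_of_notMem hpB]
    exact hmono A B hAB

lemma sideRank_submodular_of_mem_of_notMem {X A B : Finset α} {p : α} (hpA : p ∈ A)
    (hpB : p ∉ B) :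
    sideRank r X p (A ∪ B) + sideRank r X p (A ∩ B) ≤ sideRank r X p A + sideRank r X p B := by
  rw [sideRank_of_mem (mem_union_left B hpA), sideRank_of_mem hpA,
    sideRank_of_notMem (fun h => hpB (mem_inter.1 h).2), sideRank_of_notMem hpB]
  linarith [add_le_add_of_subset_union_of_subset_inter hmono hsub (X := (A \ {p}) ∪ X) (Y := B)
    (S := ((A ∪ B) \ {p}) ∪ X) (T := A ∩ B) (by grind) (by grind)]

lemma sideRank_submodular (X : Finset α) (p : α) (A B : Finset α) :
    sideRank r X p (A ∪ B) + sideRank r X p (A ∩ B) ≤ sideRank r X p A + sideRank r X p B := by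
  by_cases hpA : p ∈ A <;> by_cases hpB : p ∈ B
  · rw [sideRank_of_mem (mem_union_left B hpA), sideRank_of_mem (mem_inter.2 ⟨hpA, hpB⟩),
      sideRank_of_mem hpA, sideRank_of_mem hpB]
    linarith [add_le_add_of_subset_union_of_subset_inter hmono hsub
      (X := (A \ {p}) ∪ X) (Y := (B \ {p}) ∪ X)
      (S := ((A ∪ B) \ {p}) ∪ X) (T := ((A ∩ B) \ {p}) ∪ X) (by grind) (by grind)]
  · exact sideRank_submodular_of_mem_of_notMem hmono hsub hpA hpB
  · rw [union_comm, inter_comm, add_comm (sideRank r X p A)]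
    exact sideRank_submodular_of_mem_of_notMem hmono hsub hpB hpA
  · rw [sideRank_of_notMem (by simp [hpA, hpB]), sideRank_of_notMem (by simp [hpA]),
      sideRank_of_notMem hpA, sideRank_of_notMem hpB]
    exact hsub A B

lemma isTwoPolymatroid_sideRank (hr0 : r ∅ = 0) {X₁ X₂ : Finset α} (p : α)
    (hrank2 : ∀ e ∈ X₁, r {e} ≤ 2) (hconn : r X₁ + r X₂ ≤ r (X₁ ∪ X₂) + 1) :
    IsTwoPolymatroid (X₁ ∪ {p}) (sideRank r X₂ p) :=
  ⟨by rw [sideRank_of_notMem (notMem_empty p), hr0],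
    fun _ _ hAB hB => sideRank_mono hmono hsub hconn hAB hB,
    fun A B _ _ => sideRank_submodular hmono hsub X₂ p A B,
    sideRank_singleton_le_two hrank2⟩

lemma rank_eq_min_of_two_separation (hr0 : r ∅ = 0) {X₁ X₂ A : Finset α}
    (hsep : r X₁ + r X₂ = r (X₁ ∪ X₂) + 1) (hA : A ⊆ X₁ ∪ X₂) :
    min (r (A ∩ X₁) + r (A ∩ X₂)) (r ((A ∩ X₁) ∪ X₂) + r ((A ∩ X₂) ∪ X₁) - r (X₁ ∪ X₂)) =
      r A := by
  have hsplit : r A + r ∅ ≤ r (A ∩ X₁) + r (A ∩ X₂) :=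
    add_le_add_of_subset_union_of_subset_inter hmono hsub (by grind) (empty_subset _)
  have hcross : r (X₁ ∪ X₂) + r A ≤ r ((A ∩ X₁) ∪ X₂) + r ((A ∩ X₂) ∪ X₁) :=
    add_le_add_of_subset_union_of_subset_inter hmono hsub (by grind) (by grind)
  have h₂ : r ((A ∩ X₁) ∪ X₂) + r (A ∩ X₂) ≤ r A + r X₂ :=
    add_le_add_of_subset_union_of_subset_inter hmono hsub (by grind) (by grind)
  have h₁ : r ((A ∩ X₂) ∪ X₁) + r (A ∩ X₁) ≤ r A + r X₁ :=
    add_le_add_of_subset_union_of_subset_inter hmono hsub (by grind) (by grind)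
  omega

end Submodular

end TwoSeparation

theorem two_separation_decomposition_general {α : Type*} [DecidableEq α]
    (E : Finset α) (r : Finset α → ℤ)
    (hr0 : r ∅ = 0)
    (hmono : ∀ X Y : Finset α, X ⊆ Y → r X ≤ r Y)
    (hsub : ∀ X Y : Finset α, r (X ∪ Y) + r (X ∩ Y) ≤ r X + r Y)
    (hrank2 : ∀ e ∈ E, r {e} ≤ 2)
    (X1 X2 : Finset α) (hunion : X1 ∪ X2 = E)
    (hsep : r X1 + r X2 = r E + 1)
    (p : α) (hp : p ∉ E) :
    (sideRank r X2 p ∅ = 0 ∧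
      (∀ A B : Finset α, A ⊆ B → B ⊆ X1 ∪ {p} → sideRank r X2 p A ≤ sideRank r X2 p B) ∧
      (∀ A B : Finset α, A ⊆ X1 ∪ {p} → B ⊆ X1 ∪ {p} →
        sideRank r X2 p (A ∪ B) + sideRank r X2 p (A ∩ B) ≤
          sideRank r X2 p A + sideRank r X2 p B) ∧
      (∀ e ∈ X1 ∪ {p}, sideRank r X2 p {e} ≤ 2)) ∧
    (sideRank r X1 p ∅ = 0 ∧
      (∀ A B : Finset α, A ⊆ B → B ⊆ X2 ∪ {p} → sideRank r X1 p A ≤ sideRank r X1 p B) ∧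
      (∀ A B : Finset α, A ⊆ X2 ∪ {p} → B ⊆ X2 ∪ {p} →
        sideRank r X1 p (A ∪ B) + sideRank r X1 p (A ∩ B) ≤
          sideRank r X1 p A + sideRank r X1 p B) ∧
      (∀ e ∈ X2 ∪ {p}, sideRank r X1 p {e} ≤ 2)) ∧
    (∀ A ⊆ E,
      min (sideRank r X2 p (A ∩ (X1 ∪ {p})) + sideRank r X1 p (A ∩ (X2 ∪ {p})))
        (sideRank r X2 p ((A ∩ (X1 ∪ {p})) ∪ {p}) +
          sideRank r X1 p ((A ∩ (X2 ∪ {p})) ∪ {p}) - sideRank r X2 p {p})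
        = r A) := by
  subst hunion
  have hsep' : r X2 + r X1 = r (X2 ∪ X1) + 1 := by rw [Finset.union_comm]; linarith
  refine ⟨isTwoPolymatroid_sideRank hmono hsub hr0 p (fun e he => hrank2 e (by simp [he]))
      hsep.le,
    isTwoPolymatroid_sideRank hmono hsub hr0 p (fun e he => hrank2 e (by simp [he])) hsep'.le,
    fun A hA => ?_⟩
  have hpA : p ∉ A := fun h => hp (hA h)
  have hcut : ∀ X : Finset α, A ∩ (X ∪ {p}) = A ∩ X := fun X => by
    rw [Finset.inter_union_distrib_left, Finset.inter_singleton_of_notMem hpA,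
      Finset.union_empty]
  have hpcut : ∀ X : Finset α, p ∉ A ∩ X := fun X h => hpA (Finset.mem_inter.1 h).1
  rw [hcut, hcut, sideRank_of_notMem (hpcut X1), sideRank_of_notMem (hpcut X2),
    sideRank_union_singleton (hpcut X1), sideRank_union_singleton (hpcut X2),
    sideRank_singleton_self, ← rank_eq_min_of_two_separation hmono hsub hr0 hsep hA]
  congr 1
  linarith

/-- A 2-polymatroid whose ground set has a partition (X1, X2) with
r X1 + r X2 = r E + 1 decomposes as a parallel connection P(M1, M2) \ p. -/
theorem two_separation_decomposition {α : Type*} [DecidableEq α]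
    (E : Finset α) (r : Finset α → ℤ)
    (hr0 : r ∅ = 0)
    (hmono : ∀ X Y : Finset α, X ⊆ Y → r X ≤ r Y)
    (hsub : ∀ X Y : Finset α, r (X ∪ Y) + r (X ∩ Y) ≤ r X + r Y)
    (hrank2 : ∀ e ∈ E, r {e} ≤ 2)
    (X1 X2 : Finset α) (hunion : X1 ∪ X2 = E) (hdisj : Disjoint X1 X2)
    (hsep : r X1 + r X2 = r E + 1)
    (p : α) (hp : p ∉ E) :
    (sideRank r X2 p ∅ = 0 ∧
      (∀ A B : Finset α, A ⊆ B → B ⊆ X1 ∪ {p} → sideRank r X2 p A ≤ sideRank r X2 p B) ∧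
      (∀ A B : Finset α, A ⊆ X1 ∪ {p} → B ⊆ X1 ∪ {p} →
        sideRank r X2 p (A ∪ B) + sideRank r X2 p (A ∩ B) ≤
          sideRank r X2 p A + sideRank r X2 p B) ∧
      (∀ e ∈ X1 ∪ {p}, sideRank r X2 p {e} ≤ 2)) ∧
    (sideRank r X1 p ∅ = 0 ∧
      (∀ A B : Finset α, A ⊆ B → B ⊆ X2 ∪ {p} → sideRank r X1 p A ≤ sideRank r X1 p B) ∧
      (∀ A B : Finset α, A ⊆ X2 ∪ {p} → B ⊆ X2 ∪ {p} →
        sideRank r X1 p (A ∪ B) + sideRank r X1 p (A ∩ B) ≤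
          sideRank r X1 p A + sideRank r X1 p B) ∧
      (∀ e ∈ X2 ∪ {p}, sideRank r X1 p {e} ≤ 2)) ∧
    (∀ A ⊆ E,
      min (sideRank r X2 p (A ∩ (X1 ∪ {p})) + sideRank r X1 p (A ∩ (X2 ∪ {p})))
        (sideRank r X2 p ((A ∩ (X1 ∪ {p})) ∪ {p}) +
          sideRank r X1 p ((A ∩ (X2 ∪ {p})) ∪ {p}) - sideRank r X2 p {p})
        = r A) :=
  two_separation_decomposition_general E r hr0 hmono hsub hrank2 X1 X2 hunion hsep p hp
end

section
/- Let $M=(E,r)$ be a connected polymatroid and $A \subseteq E$ with $\lambda(A) < 2\min\{\lambda(X) : \emptyset \neq X \subsetneq E\}$. Then $M\backslash A$ or $M/A$ is connected. -/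
/-!
Suppose `(X₁, X₂)` separates `M \ A` and `(Y₁, Y₂)` separates `M / A`, both partitioning
`W = E \ A`. Two applications of submodularity give `λ(X₁ ∩ Y₁) + λ(X₂ ∩ Y₂) ≤ λ(A)`, and likewise
for the other pair of opposite corners. One of the two pairs consists of nonempty sets, and these
are disjoint proper subsets of `E`, so each has `λ > λ(A) / 2`: a contradiction.
-/

open Finset

section Connectivity

variable {α : Type*} [DecidableEq α] (r : Finset α → ℤ)

def connectivity (E X : Finset α) : ℤ := r X + r (E \ X) - r E

variable {r}

theorem exists_partition_of_not_conn {F : Finset α} (h : ¬ Conn r F) :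
    ∃ X₁ X₂ : Finset α, Disjoint X₁ X₂ ∧ X₁ ∪ X₂ = F ∧ X₁.Nonempty ∧ X₂.Nonempty ∧
      r X₁ + r X₂ = r F := by
  simp only [Conn, not_forall, not_not] at h
  obtain ⟨X, hXF, hXne, hXF', hX⟩ := h
  refine ⟨X, F \ X, disjoint_sdiff, union_sdiff_of_subset hXF,
    nonempty_iff_ne_empty.2 hXne, ?_, hX⟩
  exact sdiff_nonempty.2 fun h ↦ hXF' (hXF.antisymm h)

theorem inter_nonempty_of_subset_union {Z U V : Finset α} (hZ : Z.Nonempty) (hZUV : Z ⊆ U ∪ V)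
    (hU : ¬ (Z ∩ U).Nonempty) : (Z ∩ V).Nonempty := by
  obtain ⟨z, hz⟩ := hZ
  rcases mem_union.1 (hZUV hz) with hzU | hzV
  · exact (hU ⟨z, mem_inter.2 ⟨hz, hzU⟩⟩).elim
  · exact ⟨z, mem_inter.2 ⟨hz, hzV⟩⟩

theorem opposite_corners_nonempty {X₁ X₂ Y₁ Y₂ : Finset α} (hXY : X₁ ∪ X₂ = Y₁ ∪ Y₂)
    (hX₁ : X₁.Nonempty) (hX₂ : X₂.Nonempty) (hY₁ : Y₁.Nonempty) (hY₂ : Y₂.Nonempty) :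
    (X₁ ∩ Y₁).Nonempty ∧ (X₂ ∩ Y₂).Nonempty ∨ (X₂ ∩ Y₁).Nonempty ∧ (X₁ ∩ Y₂).Nonempty := by
  have hX₁Y : X₁ ⊆ Y₁ ∪ Y₂ := hXY ▸ subset_union_left
  have hX₂Y : X₂ ⊆ Y₂ ∪ Y₁ := union_comm Y₁ Y₂ ▸ hXY ▸ subset_union_right
  have hY₁X : Y₁ ⊆ X₁ ∪ X₂ := hXY ▸ subset_union_left
  have hY₂X : Y₂ ⊆ X₂ ∪ X₁ := union_comm X₁ X₂ ▸ hXY ▸ subset_union_right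
  by_cases h₁₁ : (X₁ ∩ Y₁).Nonempty
  · by_cases h₂₂ : (X₂ ∩ Y₂).Nonempty
    · exact Or.inl ⟨h₁₁, h₂₂⟩
    refine Or.inr ⟨inter_nonempty_of_subset_union hX₂ hX₂Y h₂₂, ?_⟩
    simpa only [inter_comm] using inter_nonempty_of_subset_union hY₂ hY₂X
      (by simpa only [inter_comm] using h₂₂)
  · refine Or.inr ⟨?_, inter_nonempty_of_subset_union hX₁ hX₁Y h₁₁⟩
    simpa only [inter_comm] using inter_nonempty_of_subset_union hY₁ hY₁X
      (by simpa only [inter_comm] using h₁₁)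

variable {E A X₁ X₂ Y₁ Y₂ : Finset α}

theorem rank_sdiff_inter_add_rank_inter_le
    (hsub : ∀ X Y : Finset α, r (X ∪ Y) + r (X ∩ Y) ≤ r X + r Y) (hA : A ⊆ E)
    (hX : Disjoint X₁ X₂) (hXW : X₁ ∪ X₂ = E \ A) (hY : Disjoint Y₁ Y₂) (hYW : Y₁ ∪ Y₂ = E \ A) :
    r (E \ (X₁ ∩ Y₁)) + r (X₂ ∩ Y₂) ≤ r (Y₂ ∪ A) + r X₂ := by
  have hunion : Y₂ ∪ A ∪ X₂ = E \ (X₁ ∩ Y₁) := by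
    ext a
    have hXa := congrArg (a ∈ ·) hXW
    have hYa := congrArg (a ∈ ·) hYW
    have hXa' := @disjoint_left.1 hX a
    have hYa' := @disjoint_left.1 hY a
    have hAa := @hA a
    simp only [mem_union, mem_sdiff, mem_inter, eq_iff_iff] at hXa hYa ⊢
    tauto
  have hinter : (Y₂ ∪ A) ∩ X₂ = X₂ ∩ Y₂ := by
    ext a
    have hXa := congrArg (a ∈ ·) hXW
    simp only [mem_union, mem_sdiff, mem_inter, eq_iff_iff] at hXa ⊢
    tauto
  simpa only [hunion, hinter] using hsub (Y₂ ∪ A) X₂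

theorem connectivity_inter_add_connectivity_inter_le
    (hsub : ∀ X Y : Finset α, r (X ∪ Y) + r (X ∩ Y) ≤ r X + r Y) (hA : A ⊆ E)
    (hX : Disjoint X₁ X₂) (hXW : X₁ ∪ X₂ = E \ A) (hY : Disjoint Y₁ Y₂) (hYW : Y₁ ∪ Y₂ = E \ A)
    (hdel : r X₁ + r X₂ = r (E \ A)) (hcon : r (Y₁ ∪ A) + r (Y₂ ∪ A) = r E + r A) :
    connectivity r E (X₁ ∩ Y₁) + connectivity r E (X₂ ∩ Y₂) ≤ connectivity r E A := by
  have h₁ := rank_sdiff_inter_add_rank_inter_le hsub hA hX hXW hY hYW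
  have h₂ := rank_sdiff_inter_add_rank_inter_le hsub hA hX.symm (by rwa [union_comm]) hY.symm
    (by rwa [union_comm])
  unfold connectivity
  linarith

theorem connectivity_lt_add_of_disjoint
    (hsmall : ∀ X ⊆ E, X ≠ ∅ → X ≠ E → connectivity r E A < 2 * connectivity r E X)
    {Z₁ Z₂ : Finset α} (hZ : Disjoint Z₁ Z₂) (hZE : Z₁ ∪ Z₂ ⊆ E) (hZ₁ : Z₁.Nonempty)
    (hZ₂ : Z₂.Nonempty) :
    connectivity r E A < connectivity r E Z₁ + connectivity r E Z₂ := by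
  have h₁ := hsmall Z₁ (union_subset_left hZE) hZ₁.ne_empty fun h ↦
    hZ₂.ne_empty <| (disjoint_self_iff_empty _).1 <| hZ.mono_left (h ▸ union_subset_right hZE)
  have h₂ := hsmall Z₂ (union_subset_right hZE) hZ₂.ne_empty fun h ↦
    hZ₁.ne_empty <| (disjoint_self_iff_empty _).1 <| hZ.mono_right (h ▸ union_subset_left hZE)
  linarith

end Connectivity

theorem delete_or_contract_conn_general {α : Type*} [DecidableEq α]
    (E : Finset α) (r : Finset α → ℤ)
    (hsub : ∀ X Y : Finset α, r (X ∪ Y) + r (X ∩ Y) ≤ r X + r Y)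
    (A : Finset α) (hA : A ⊆ E)
    (hsmall : ∀ X ⊆ E, X ≠ ∅ → X ≠ E →
      r A + r (E \ A) - r E < 2 * (r X + r (E \ X) - r E)) :
    Conn r (E \ A) ∨ Conn (fun X => r (X ∪ A) - r A) (E \ A) := by
  by_contra! h
  obtain ⟨X₁, X₂, hX, hXW, hX₁, hX₂, hdel⟩ := exists_partition_of_not_conn h.1
  obtain ⟨Y₁, Y₂, hY, hYW, hY₁, hY₂, hcon⟩ := exists_partition_of_not_conn h.2
  have hcon : r (Y₁ ∪ A) + r (Y₂ ∪ A) = r E + r A := by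
    rw [sdiff_union_of_subset hA] at hcon
    linarith
  have hcorners : ∀ {Z₁ Z₂ : Finset α}, Disjoint Z₁ Z₂ → Z₁ ∪ Z₂ = E \ A →
      r Z₁ + r Z₂ = r (E \ A) → (Z₁ ∩ Y₁).Nonempty → (Z₂ ∩ Y₂).Nonempty → False := by
    intro Z₁ Z₂ hZ hZW hZr h₁ h₂
    have hle := connectivity_inter_add_connectivity_inter_le hsub hA hZ hZW hY hYW hZr hcon
    have hlt := connectivity_lt_add_of_disjoint hsmall
      (hZ.mono inter_subset_left inter_subset_left)
      (union_subset_union inter_subset_left inter_subset_left |>.trans (hZW ▸ sdiff_subset)) h₁ h₂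
    omega
  rcases opposite_corners_nonempty (hXW.trans hYW.symm) hX₁ hX₂ hY₁ hY₂ with ⟨h₁, h₂⟩ | ⟨h₁, h₂⟩
  · exact hcorners hX hXW hdel h₁ h₂
  · exact hcorners hX.symm (by rwa [union_comm]) (by rwa [add_comm]) h₁ h₂

/-- If λ(A) is less than twice the minimum of λ over nonempty proper subsets,
then M\A or M/A is connected. -/
theorem delete_or_contract_conn {α : Type*} [DecidableEq α]
    (E : Finset α) (r : Finset α → ℤ)
    (hr0 : r ∅ = 0)
    (hmono : ∀ X Y : Finset α, X ⊆ Y → r X ≤ r Y)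
    (hsub : ∀ X Y : Finset α, r (X ∪ Y) + r (X ∩ Y) ≤ r X + r Y)
    (hconn : Conn r E)
    (A : Finset α) (hA : A ⊆ E)
    (hsmall : ∀ X ⊆ E, X ≠ ∅ → X ≠ E →
      r A + r (E \ A) - r E < 2 * (r X + r (E \ X) - r E)) :
    Conn r (E \ A) ∨ Conn (fun X => r (X ∪ A) - r A) (E \ A) :=
  delete_or_contract_conn_general E r hsub A hA hsmall
end

section
/- Let $M$ be a connected polymatroid and let $e$, $f$ be distinct elements of $E(M)$. Let each of $\dagger, \ddagger$ denote a deletion or contraction operation of a single element. Suppose $M\dagger e$ and $M\dagger e\,\ddagger f$ are connected but $M\ddagger f$ is not connected. Then $\{e\}$ is $1$-separating in $M \ddagger f$ (i.e., $\lambda_{M\ddagger f}(\{e\}) = 0$), and consequently $M\ddagger f\backslash e = M\ddagger f/e$. -/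
/-- The rank function after removing `e`: deletion if `b = true`, contraction otherwise. -/
def rmOp {α : Type*} [DecidableEq α] (b : Bool) (r : Finset α → ℤ) (e : α) :
    Finset α → ℤ :=
  if b then r else fun X => r (X ∪ {e}) - r {e}

/-! Write `λ` (`connFn`) for the connectivity function of `N = M‡f` on `F = E - f`. For
`X ⊆ F - e`, removing `e` from `N`, by deletion or contraction, can only lower `λ(X)`, and
`N†e = M†e‡f` is connected. So a `1`-separation of `N` has a side `X` avoiding `e`, which must be
all of `F - e`; hence `λ_N({e}) = 0`. Then `r_N(X ∪ e) ≤ r_N(X) + r_N(e)` is an equality, since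
submodularity applied to `X ∪ e` and `F - e` gives the reverse inequality. -/

namespace Polymatroid

variable {α : Type*} [DecidableEq α]

def Submodular (s : Finset α → ℤ) : Prop :=
  ∀ X Y : Finset α, s (X ∪ Y) + s (X ∩ Y) ≤ s X + s Y

def connFn (s : Finset α → ℤ) (F X : Finset α) : ℤ :=
  s X + s (F \ X) - s F

variable {s : Finset α → ℤ} {F X : Finset α} {e : α}

theorem conn_iff_connFn_ne_zero :
    Conn s F ↔ ∀ X ⊆ F, X ≠ ∅ → X ≠ F → connFn s F X ≠ 0 := by
  simp only [Conn, connFn, sub_ne_zero]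

theorem rmOp_empty (b : Bool) (hs0 : s ∅ = 0) : rmOp b s e ∅ = 0 := by
  cases b <;> simp [rmOp, hs0]

theorem Submodular.rmOp (hsub : Submodular s) (b : Bool) : Submodular (rmOp b s e) := by
  cases b
  · intro X Y
    have h := hsub (X ∪ {e}) (Y ∪ {e})
    rw [← Finset.union_union_distrib_right, ← Finset.inter_union_distrib_right] at h
    simp only [_root_.rmOp, Bool.false_eq_true, if_false]
    linarith
  · exact hsub

theorem rmOp_comm (b c : Bool) (s : Finset α → ℤ) (e f : α) :
    rmOp b (rmOp c s f) e = rmOp c (rmOp b s e) f := by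
  funext X
  cases b <;> cases c <;> simp only [rmOp, Bool.false_eq_true, if_false, if_true]
  rw [Finset.union_right_comm, Finset.union_comm {f}]
  ring

theorem connFn_nonneg (hs0 : s ∅ = 0) (hsub : Submodular s) (hX : X ⊆ F) :
    0 ≤ connFn s F X := by
  have h := hsub X (F \ X)
  rw [Finset.union_sdiff_of_subset hX, Finset.inter_sdiff_self, hs0] at h
  unfold connFn
  linarith

theorem connFn_sdiff (hX : X ⊆ F) : connFn s F (F \ X) = connFn s F X := by
  rw [connFn, connFn, Finset.sdiff_sdiff_eq_self hX]
  ring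

theorem connFn_rmOp_le (hs0 : s ∅ = 0) (hsub : Submodular s) (b : Bool) (he : e ∈ F)
    (hX : X ⊆ F \ {e}) : connFn (rmOp b s e) (F \ {e}) X ≤ connFn s F X := by
  have heX : e ∉ X := fun h => (Finset.mem_sdiff.mp (hX h)).2 (Finset.mem_singleton_self e)
  have hdisj : X ∩ {e} = ∅ := Finset.inter_singleton_of_notMem heX
  cases b
  · have hcompl : (F \ {e}) \ X ∪ {e} = F \ X := by
      ext x; by_cases hx : x = e <;> simp_all
    have h := hsub X {e}
    rw [hdisj, hs0] at h
    simp only [connFn, rmOp, Bool.false_eq_true, if_false, hcompl,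
      Finset.sdiff_union_of_subset (Finset.singleton_subset_iff.mpr he)]
    linarith
  · have h := hsub (F \ {e}) (F \ X)
    rw [← Finset.sdiff_inter_distrib_right, Finset.inter_comm {e}, hdisj, Finset.sdiff_empty,
      ← Finset.sdiff_sdiff_left'] at h
    simp only [connFn, rmOp, ↓reduceIte]
    linarith

theorem eq_sdiff_singleton_of_connFn_eq_zero (hs0 : s ∅ = 0) (hsub : Submodular s) (b : Bool)
    (he : e ∈ F) (hconn : Conn (rmOp b s e) (F \ {e})) (hX : X ⊆ F \ {e}) (hXne : X.Nonempty)
    (hX0 : connFn s F X = 0) : X = F \ {e} := by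
  have hle := connFn_rmOp_le hs0 hsub b he hX
  have hge := connFn_nonneg (rmOp_empty b hs0) (hsub.rmOp (e := e) b) hX
  by_contra hne
  exact conn_iff_connFn_ne_zero.mp hconn X hX hXne.ne_empty hne (le_antisymm (hX0 ▸ hle) hge)

theorem connFn_singleton_eq_zero (hs0 : s ∅ = 0) (hsub : Submodular s) (b : Bool)
    (he : e ∈ F) (hconn : Conn (rmOp b s e) (F \ {e})) (hnot : ¬ Conn s F) :
    connFn s F {e} = 0 := by
  have heF : {e} ⊆ F := Finset.singleton_subset_iff.mpr he
  simp only [conn_iff_connFn_ne_zero, not_forall, not_not] at hnot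
  obtain ⟨X, hXF, hXne, hXF', hX0⟩ := hnot
  obtain ⟨Y, hYF, hYne, heY, hY0⟩ : ∃ Y ⊆ F, Y.Nonempty ∧ e ∉ Y ∧ connFn s F Y = 0 := by
    by_cases heX : e ∈ X
    · refine ⟨F \ X, Finset.sdiff_subset, ?_, by simp [heX], by rw [connFn_sdiff hXF, hX0]⟩
      exact Finset.sdiff_nonempty.mpr fun h => hXF' (Finset.Subset.antisymm hXF h)
    · exact ⟨X, hXF, Finset.nonempty_iff_ne_empty.mpr hXne, heX, hX0⟩
  have hYe : Y ⊆ F \ {e} := Finset.subset_sdiff.mpr ⟨hYF, Finset.disjoint_singleton_right.mpr heY⟩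
  rw [← connFn_sdiff heF, ← eq_sdiff_singleton_of_connFn_eq_zero hs0 hsub b he hconn hYe hYne hY0,
    hY0]

theorem eq_union_singleton_sub_of_connFn_singleton_eq_zero (hs0 : s ∅ = 0) (hsub : Submodular s)
    (he : e ∈ F) (hsep : connFn s F {e} = 0) (hX : X ⊆ F \ {e}) :
    s X = s (X ∪ {e}) - s {e} := by
  have heX : e ∉ X := fun h => (Finset.mem_sdiff.mp (hX h)).2 (Finset.mem_singleton_self e)
  have hle := hsub X {e}
  rw [Finset.inter_singleton_of_notMem heX, hs0] at hle
  have hge := hsub (X ∪ {e}) (F \ {e})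
  have hunion : X ∪ {e} ∪ (F \ {e}) = F := by
    rw [Finset.union_assoc, Finset.union_sdiff_of_subset (Finset.singleton_subset_iff.mpr he),
      Finset.union_eq_right.mpr (hX.trans Finset.sdiff_subset)]
  have hinter : (X ∪ {e}) ∩ (F \ {e}) = X := by
    rw [Finset.union_inter_distrib_right, Finset.inter_eq_left.mpr hX]
    simp
  rw [hunion, hinter] at hge
  unfold connFn at hsep
  linarith

end Polymatroid

theorem daggy_general {α : Type*} [DecidableEq α]
    (E : Finset α) (r : Finset α → ℤ)
    (hr0 : r ∅ = 0)
    (hsub : ∀ X Y : Finset α, r (X ∪ Y) + r (X ∩ Y) ≤ r X + r Y)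
    (e f : α) (he : e ∈ E) (hef : e ≠ f)
    (dag ddag : Bool)
    (h2 : Conn (rmOp ddag (rmOp dag r e) f) ((E \ {e}) \ {f}))
    (h3 : ¬ Conn (rmOp ddag r f) (E \ {f})) :
    (rmOp ddag r f {e} + rmOp ddag r f ((E \ {f}) \ {e}) = rmOp ddag r f (E \ {f})) ∧
    (∀ X ⊆ (E \ {f}) \ {e},
      rmOp ddag r f X = rmOp ddag r f (X ∪ {e}) - rmOp ddag r f {e}) := by
  have hs0 := Polymatroid.rmOp_empty (e := f) ddag hr0
  have hssub := Polymatroid.Submodular.rmOp (e := f) hsub ddag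
  have heF : e ∈ E \ {f} := Finset.mem_sdiff.mpr ⟨he, by simpa using hef⟩
  have hconn : Conn (rmOp dag (rmOp ddag r f) e) ((E \ {f}) \ {e}) := by
    rwa [Polymatroid.rmOp_comm, sdiff_right_comm]
  have hsep := Polymatroid.connFn_singleton_eq_zero hs0 hssub dag heF hconn h3
  exact ⟨sub_eq_zero.mp hsep, fun X hX =>
    Polymatroid.eq_union_singleton_sub_of_connFn_singleton_eq_zero hs0 hssub heF hsep hX⟩

/-- If `M†e` and `M†e‡f` are connected but `M‡f` is not, then `{e}` is 1-separating in
`M‡f` and `M‡f\e = M‡f/e`. -/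
theorem daggy {α : Type*} [DecidableEq α]
    (E : Finset α) (r : Finset α → ℤ)
    (hr0 : r ∅ = 0)
    (hmono : ∀ X Y : Finset α, X ⊆ Y → r X ≤ r Y)
    (hsub : ∀ X Y : Finset α, r (X ∪ Y) + r (X ∩ Y) ≤ r X + r Y)
    (hconn : Conn r E)
    (e f : α) (he : e ∈ E) (hf : f ∈ E) (hef : e ≠ f)
    (dag ddag : Bool)
    (h1 : Conn (rmOp dag r e) (E \ {e}))
    (h2 : Conn (rmOp ddag (rmOp dag r e) f) ((E \ {e}) \ {f}))
    (h3 : ¬ Conn (rmOp ddag r f) (E \ {f})) :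
    (rmOp ddag r f {e} + rmOp ddag r f ((E \ {f}) \ {e}) = rmOp ddag r f (E \ {f})) ∧
    (∀ X ⊆ (E \ {f}) \ {e},
      rmOp ddag r f X = rmOp ddag r f (X ∪ {e}) - rmOp ddag r f {e}) :=
  daggy_general E r hr0 hsub e f he hef dag ddag h2 h3
end

section
/- Let $M$ be a connected polymatroid, $e, f$ distinct elements of $E(M)$, and $\{\alpha, \beta\} = \{\text{delete}, \text{contract}\} = \{\gamma, \delta\}$ (as single-element removal operations). Assume $M\alpha e$ and $M\alpha e\,\gamma f$ are connected. Then either (i) $M\gamma f$ is connected and $M\alpha e\,\gamma f = M\gamma f\,\alpha e$; or (ii) $M\gamma f$ is disconnected, $M \alpha e\,\gamma f = M\beta e\,\gamma f$, and one of the following holds: (a) $M\beta e$ is connected; (b) $M\beta e$ is disconnected, $M\alpha e\,\gamma f = M\delta f\,\beta e$, and $M\delta f$ is connected; (c) $M\beta e$ and $M\delta f$ are both disconnected and $M\alpha e\,\gamma f = M\alpha e\,\delta f$. -/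
/-!
Suppose `M γ f` is disconnected while `M γ f α e = M α e γ f` is connected. Take a separation
`(Z, W)` of `M γ f` with `e ∈ Z`. If `Z ≠ {e}`, then `(Z - e, W)` still separates `M γ f α e`,
so `Z = {e}`: the element `e` is a separator of `M γ f`, and on sets avoiding `e` deleting and
contracting `e` both agree with `M γ f`. Each disconnected minor in the case analysis is
handled this way, with the roles of `e`, `f` and of the operations exchanged.
-/

open Finset

section Removal

variable {α : Type*} [DecidableEq α] {q : Finset α → ℤ}

theorem Conn.congr {q' : Finset α → ℤ} {F : Finset α} (hc : Conn q F)
    (h : ∀ X ⊆ F, q X = q' X) : Conn q' F := by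
  intro X hX hX0 hXF
  rw [← h X hX, ← h (F \ X) sdiff_subset, ← h F Subset.rfl]
  exact hc X hX hX0 hXF

theorem rmOp_comm (r : Finset α → ℤ) (a c : Bool) (e f : α) :
    rmOp c (rmOp a r e) f = rmOp a (rmOp c r f) e := by
  funext X
  cases a <;> cases c <;> simp only [rmOp, Bool.false_eq_true, if_false, if_true]
  rw [union_right_comm, union_comm {f} {e}]
  ring

theorem add_eq_of_separation (hq0 : q ∅ = 0)
    (hsub : ∀ X Y : Finset α, q (X ∪ Y) + q (X ∩ Y) ≤ q X + q Y)
    {Z W A B : Finset α} (hZW : Disjoint Z W) (hsep : q Z + q W = q (Z ∪ W))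
    (hA : A ⊆ Z) (hB : B ⊆ W) : q (A ∪ B) = q A + q B := by
  have hZA : Z ∪ (A ∪ W) = Z ∪ W := by rw [← union_assoc, union_eq_left.2 hA]
  have hZAW : Z ∩ (A ∪ W) = A := by
    rw [inter_union_distrib_left, disjoint_iff_inter_eq_empty.1 hZW, union_empty,
      inter_eq_right.2 hA]
  have hABW : (A ∪ B) ∪ W = A ∪ W := by rw [union_assoc, union_eq_right.2 hB]
  have hABW' : (A ∪ B) ∩ W = B := by
    rw [union_inter_distrib_right, disjoint_iff_inter_eq_empty.1 (hZW.mono_left hA),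
      empty_union, inter_eq_left.2 hB]
  have hAB : A ∩ B = ∅ := disjoint_iff_inter_eq_empty.1 (hZW.mono hA hB)
  have h₁ := hsub Z (A ∪ W)
  have h₂ := hsub (A ∪ B) W
  have h₃ := hsub A B
  rw [hZA, hZAW] at h₁
  rw [hABW, hABW'] at h₂
  rw [hAB, hq0] at h₃
  linarith

theorem rmOp_empty (hq0 : q ∅ = 0) (p : Bool) (e : α) : rmOp p q e ∅ = 0 := by
  cases p <;> simp [rmOp, hq0]

theorem rmOp_submodular (hsub : ∀ X Y : Finset α, q (X ∪ Y) + q (X ∩ Y) ≤ q X + q Y)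
    (p : Bool) (e : α) (X Y : Finset α) :
    rmOp p q e (X ∪ Y) + rmOp p q e (X ∩ Y) ≤ rmOp p q e X + rmOp p q e Y := by
  cases p
  · have h := hsub (X ∪ {e}) (Y ∪ {e})
    rw [← union_union_distrib_right, ← inter_union_distrib_right] at h
    simp only [rmOp, Bool.false_eq_true, if_false]
    linarith
  · exact hsub X Y

theorem rmOp_separation (hq0 : q ∅ = 0)
    (hsub : ∀ X Y : Finset α, q (X ∪ Y) + q (X ∩ Y) ≤ q X + q Y)
    {Z W : Finset α} (hZW : Disjoint Z W) (hsep : q Z + q W = q (Z ∪ W))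
    {x : α} (hx : x ∈ Z) (p : Bool) :
    rmOp p q x (Z \ {x}) + rmOp p q x W = rmOp p q x ((Z ∪ W) \ {x}) := by
  have hxW : x ∉ W := disjoint_left.1 hZW hx
  cases p
  · have hW := add_eq_of_separation hq0 hsub hZW hsep (singleton_subset_iff.2 hx) Subset.rfl
    have hx' : ({x} : Finset α) ⊆ Z ∪ W := singleton_subset_iff.2 (mem_union_left W hx)
    simp only [rmOp, Bool.false_eq_true, if_false]
    rw [sdiff_union_of_subset (singleton_subset_iff.2 hx), sdiff_union_of_subset hx',
      union_comm W, hW]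
    linarith
  · simp only [rmOp, if_true]
    rw [union_sdiff_distrib, sdiff_eq_self_of_disjoint (disjoint_singleton_right.2 hxW),
      add_eq_of_separation hq0 hsub hZW hsep sdiff_subset Subset.rfl]

theorem exists_separation_mem {F : Finset α} (hF : ¬ Conn q F) {x : α} (hx : x ∈ F) :
    ∃ Z W : Finset α, Disjoint Z W ∧ Z ∪ W = F ∧ x ∈ Z ∧ W.Nonempty ∧ q Z + q W = q F := by
  simp only [Conn, not_forall, not_not] at hF
  obtain ⟨X, hXF, hX0, hXF', hXsep⟩ := hF
  by_cases hxX : x ∈ X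
  · refine ⟨X, F \ X, disjoint_sdiff, union_sdiff_of_subset hXF, hxX, ?_, hXsep⟩
    exact sdiff_nonempty.2 fun h => hXF' (Subset.antisymm hXF h)
  · refine ⟨F \ X, X, sdiff_disjoint, sdiff_union_of_subset hXF, mem_sdiff.2 ⟨hx, hxX⟩,
      nonempty_iff_ne_empty.2 hX0, ?_⟩
    linarith

theorem singleton_separator_of_conn_rmOp (hq0 : q ∅ = 0)
    (hsub : ∀ X Y : Finset α, q (X ∪ Y) + q (X ∩ Y) ≤ q X + q Y)
    {F : Finset α} (hF : ¬ Conn q F) {x : α} (hx : x ∈ F)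
    {p : Bool} (hc : Conn (rmOp p q x) (F \ {x})) : q {x} + q (F \ {x}) = q F := by
  obtain ⟨Z, W, hZW, rfl, hxZ, hW, hsep⟩ := exists_separation_mem hF hx
  have hxW : x ∉ W := disjoint_left.1 hZW hxZ
  have hrest : ((Z ∪ W) \ {x}) \ (Z \ {x}) = W := by
    rw [union_sdiff_distrib, sdiff_eq_self_of_disjoint (disjoint_singleton_right.2 hxW),
      union_sdiff_cancel_left (hZW.mono_left sdiff_subset)]
  obtain rfl : Z = {x} := by
    by_contra hZx
    refine hc (Z \ {x}) (sdiff_subset_sdiff subset_union_left Subset.rfl) ?_ ?_ ?_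
    · rw [← nonempty_iff_ne_empty, sdiff_nonempty]
      exact fun h => hZx (Subset.antisymm h (singleton_subset_iff.2 hxZ))
    · intro h
      rw [h, sdiff_self] at hrest
      exact hW.ne_empty hrest.symm
    · rw [hrest]
      exact rmOp_separation hq0 hsub hZW hsep hxZ p
  rwa [union_sdiff_left, sdiff_eq_self_of_disjoint (disjoint_singleton_right.2 hxW)]

theorem rmOp_eq_of_singleton_separator (hq0 : q ∅ = 0)
    (hsub : ∀ X Y : Finset α, q (X ∪ Y) + q (X ∩ Y) ≤ q X + q Y)
    {F : Finset α} {x : α}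
    (hsep : q {x} + q (F \ {x}) = q F) (hx : x ∈ F) (p : Bool) :
    ∀ X ⊆ F \ {x}, rmOp p q x X = q X := by
  intro X hX
  cases p
  · have hsep' : q {x} + q (F \ {x}) = q ({x} ∪ F \ {x}) := by
      rwa [union_sdiff_of_subset (singleton_subset_iff.2 hx)]
    simp only [rmOp, Bool.false_eq_true, if_false]
    rw [union_comm, add_eq_of_separation hq0 hsub disjoint_sdiff hsep' Subset.rfl hX]
    ring
  · rfl

theorem rmOp_eq_of_not_conn (hq0 : q ∅ = 0)
    (hsub : ∀ X Y : Finset α, q (X ∪ Y) + q (X ∩ Y) ≤ q X + q Y)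
    {F : Finset α} (hF : ¬ Conn q F) {x : α} (hx : x ∈ F)
    {p : Bool} (hc : Conn (rmOp p q x) (F \ {x})) (p' : Bool) :
    ∀ X ⊆ F \ {x}, rmOp p' q x X = q X :=
  rmOp_eq_of_singleton_separator hq0 hsub
    (singleton_separator_of_conn_rmOp hq0 hsub hF hx hc) hx p'

end Removal

theorem two_removals_general {α : Type*} [DecidableEq α]
    (E : Finset α) (r : Finset α → ℤ)
    (hr0 : r ∅ = 0)
    (hsub : ∀ X Y : Finset α, r (X ∪ Y) + r (X ∩ Y) ≤ r X + r Y)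
    (e f : α) (he : e ∈ E) (hf : f ∈ E) (hef : e ≠ f)
    (a b c d : Bool)
    (h2 : Conn (rmOp c (rmOp a r e) f) ((E \ {e}) \ {f})) :
    (Conn (rmOp c r f) (E \ {f}) ∧
      ∀ X ⊆ (E \ {e}) \ {f},
        rmOp c (rmOp a r e) f X = rmOp a (rmOp c r f) e X) ∨
    (¬ Conn (rmOp c r f) (E \ {f}) ∧
      (∀ X ⊆ (E \ {e}) \ {f},
        rmOp c (rmOp a r e) f X = rmOp c (rmOp b r e) f X) ∧
      (Conn (rmOp b r e) (E \ {e}) ∨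
       (¬ Conn (rmOp b r e) (E \ {e}) ∧
         (∀ X ⊆ (E \ {e}) \ {f},
           rmOp c (rmOp a r e) f X = rmOp b (rmOp d r f) e X) ∧
         Conn (rmOp d r f) (E \ {f})) ∨
       (¬ Conn (rmOp b r e) (E \ {e}) ∧ ¬ Conn (rmOp d r f) (E \ {f}) ∧
         (∀ X ⊆ (E \ {e}) \ {f},
           rmOp c (rmOp a r e) f X = rmOp d (rmOp a r e) f X)))) := by
  have he' : e ∈ E \ {f} := mem_sdiff.2 ⟨he, notMem_singleton.2 hef⟩
  have hf' : f ∈ E \ {e} := mem_sdiff.2 ⟨hf, notMem_singleton.2 hef.symm⟩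
  have hG : (E \ {f}) \ {e} = (E \ {e}) \ {f} := sdiff_sdiff_comm
  by_cases hγ : Conn (rmOp c r f) (E \ {f})
  · exact .inl ⟨hγ, fun X _ => by rw [rmOp_comm]⟩
  have hγe := rmOp_eq_of_not_conn (rmOp_empty hr0 c f) (rmOp_submodular hsub c f) hγ he'
    (p := a) (by rw [hG, ← rmOp_comm]; exact h2)
  rw [hG] at hγe
  have hαβ : ∀ X ⊆ (E \ {e}) \ {f}, rmOp c (rmOp a r e) f X = rmOp c (rmOp b r e) f X := by
    intro X hX
    rw [rmOp_comm, rmOp_comm r b, hγe a X hX, hγe b X hX]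
  refine .inr ⟨hγ, hαβ, ?_⟩
  by_cases hβ : Conn (rmOp b r e) (E \ {e})
  · exact .inl hβ
  have hβf := rmOp_eq_of_not_conn (rmOp_empty hr0 b e) (rmOp_submodular hsub b e) hβ hf'
    (h2.congr hαβ)
  have hδβ : ∀ X ⊆ (E \ {e}) \ {f}, rmOp c (rmOp a r e) f X = rmOp b (rmOp d r f) e X := by
    intro X hX
    rw [hαβ X hX, hβf c X hX, ← hβf d X hX, rmOp_comm]
  by_cases hδ : Conn (rmOp d r f) (E \ {f})
  · exact .inr (.inl ⟨hβ, hδβ, hδ⟩)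
  have hδe := rmOp_eq_of_not_conn (rmOp_empty hr0 d f) (rmOp_submodular hsub d f) hδ he'
    (p := b) (by rw [hG]; exact h2.congr hδβ)
  rw [hG] at hδe
  refine .inr (.inr ⟨hβ, hδ, fun X hX => ?_⟩)
  rw [hδβ X hX, hδe b X hX, ← hδe a X hX, rmOp_comm]

/-- Case analysis on removing two elements from a connected polymatroid while
maintaining connectivity. Here α,β are complementary operations, as are γ,δ. -/
theorem two_removals {α : Type*} [DecidableEq α]
    (E : Finset α) (r : Finset α → ℤ)
    (hr0 : r ∅ = 0)
    (hmono : ∀ X Y : Finset α, X ⊆ Y → r X ≤ r Y)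
    (hsub : ∀ X Y : Finset α, r (X ∪ Y) + r (X ∩ Y) ≤ r X + r Y)
    (hconn : Conn r E)
    (e f : α) (he : e ∈ E) (hf : f ∈ E) (hef : e ≠ f)
    (a b c d : Bool) (hab : b = !a) (hcd : d = !c)
    (h1 : Conn (rmOp a r e) (E \ {e}))
    (h2 : Conn (rmOp c (rmOp a r e) f) ((E \ {e}) \ {f})) :
    (Conn (rmOp c r f) (E \ {f}) ∧
      ∀ X ⊆ (E \ {e}) \ {f},
        rmOp c (rmOp a r e) f X = rmOp a (rmOp c r f) e X) ∨
    (¬ Conn (rmOp c r f) (E \ {f}) ∧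
      (∀ X ⊆ (E \ {e}) \ {f},
        rmOp c (rmOp a r e) f X = rmOp c (rmOp b r e) f X) ∧
      (Conn (rmOp b r e) (E \ {e}) ∨
       (¬ Conn (rmOp b r e) (E \ {e}) ∧
         (∀ X ⊆ (E \ {e}) \ {f},
           rmOp c (rmOp a r e) f X = rmOp b (rmOp d r f) e X) ∧
         Conn (rmOp d r f) (E \ {f})) ∨
       (¬ Conn (rmOp b r e) (E \ {e}) ∧ ¬ Conn (rmOp d r f) (E \ {f}) ∧
         (∀ X ⊆ (E \ {e}) \ {f},
           rmOp c (rmOp a r e) f X = rmOp d (rmOp a r e) f X)))) :=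
  two_removals_general E r hr0 hsub e f he hf hef a b c d h2
end

section
/- Let $M=(E,r)$ be a connected polymatroid with $|E| \ge 2$, let $f \in E$, and let $K$ be a component of $M/f$. Then the restriction $M|(K \cup \{f\})$ is connected. -/
lemma split_ge {α : Type*} [DecidableEq α] (s : Finset α → ℤ)
    (hmono : ∀ X Y : Finset α, X ⊆ Y → s X ≤ s Y)
    (hsub : ∀ X Y : Finset α, s (X ∪ Y) + s (X ∩ Y) ≤ s X + s Y)
    (W X A : Finset α) (hXW : X ⊆ W) (hAW : A ⊆ W)
    (hsep : s X + s (W \ X) = s W) :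
    s (A ∩ X) + s (A \ X) ≤ s A := by
  have h1 := hsub ((A ∩ X) ∪ (W \ X)) X
  have e1 : ((A ∩ X) ∪ (W \ X)) ∪ X = W := by
    ext x
    simp only [Finset.mem_union, Finset.mem_inter, Finset.mem_sdiff]
    constructor
    · rintro ((⟨_, hX⟩ | ⟨hW, _⟩) | hX)
      · exact hXW hX
      · exact hW
      · exact hXW hX
    · intro hW
      by_cases hx : x ∈ X
      · right; exact hx
      · left; right; exact ⟨hW, hx⟩
  have e2 : ((A ∩ X) ∪ (W \ X)) ∩ X = A ∩ X := by
    ext x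
    simp only [Finset.mem_union, Finset.mem_inter, Finset.mem_sdiff]
    tauto
  rw [e1, e2] at h1
  have h2 := hsub A (W \ X)
  have e3 : A ∩ (W \ X) = A \ X := by
    ext x
    simp only [Finset.mem_inter, Finset.mem_sdiff]
    exact ⟨fun ⟨h, _, hx⟩ => ⟨h, hx⟩, fun ⟨h, hx⟩ => ⟨h, hAW h, hx⟩⟩
  rw [e3] at h2
  have hm : s ((A ∩ X) ∪ (W \ X)) ≤ s (A ∪ (W \ X)) :=
    hmono _ _ (Finset.union_subset_union_left Finset.inter_subset_left)
  linarith

lemma exists_conn_superset {α : Type*} [DecidableEq α] (s : Finset α → ℤ)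
    (hs0 : s ∅ = 0)
    (hmono : ∀ X Y : Finset α, X ⊆ Y → s X ≤ s Y)
    (hsub : ∀ X Y : Finset α, s (X ∪ Y) + s (X ∩ Y) ≤ s X + s Y)
    (G C : Finset α) (hCG : C ⊆ G) (hCne : C ≠ ∅) (hCconn : Conn s C)
    (hgap : s G < s C + s (G \ C)) :
    ∃ W, C ⊆ W ∧ W ≠ C ∧ W ⊆ G ∧ Conn s W := by
  classical
  set 𝒮 := G.powerset.filter (fun W => C ⊆ W ∧ s W < s C + s (W \ C)) with h𝒮
  have hG𝒮 : G ∈ 𝒮 := Finset.mem_filter.mpr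
    ⟨Finset.mem_powerset.mpr (Finset.Subset.refl G), hCG, hgap⟩
  obtain ⟨W, hW𝒮, hmin⟩ := Finset.exists_min_image 𝒮 Finset.card ⟨G, hG𝒮⟩
  have hWG : W ⊆ G := Finset.mem_powerset.mp (Finset.mem_filter.mp hW𝒮).1
  have hCW : C ⊆ W := (Finset.mem_filter.mp hW𝒮).2.1
  have hWlt : s W < s C + s (W \ C) := (Finset.mem_filter.mp hW𝒮).2.2
  have key : ∀ Y, Y ⊆ W → C ⊆ Y → Y ≠ W → s Y + s (W \ Y) = s W → False := by
    intro Y hYW hCY hYne hsep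
    have hd : s (W \ C) ≤ s (Y \ C) + s (W \ Y) := by
      have h := hsub (Y \ C) (W \ Y)
      have e1 : (Y \ C) ∪ (W \ Y) = W \ C := by
        ext x
        simp only [Finset.mem_union, Finset.mem_sdiff]
        constructor
        · rintro (⟨hY, hC⟩ | ⟨hW, hY⟩)
          · exact ⟨hYW hY, hC⟩
          · exact ⟨hW, fun hC => hY (hCY hC)⟩
        · rintro ⟨hW, hC⟩
          by_cases hY : x ∈ Y
          · left; exact ⟨hY, hC⟩
          · right; exact ⟨hW, hY⟩
      have e2 : (Y \ C) ∩ (W \ Y) = ∅ := by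
        ext x
        simp only [Finset.mem_inter, Finset.mem_sdiff, Finset.notMem_empty, iff_false]
        tauto
      rw [e1, e2, hs0] at h
      linarith
    have hY𝒮 : Y ∈ 𝒮 := Finset.mem_filter.mpr
      ⟨Finset.mem_powerset.mpr (hYW.trans hWG), hCY, by linarith⟩
    have h1 := hmin Y hY𝒮
    have h2 := Finset.card_lt_card (Finset.ssubset_iff_subset_ne.mpr ⟨hYW, hYne⟩)
    omega
  have hconnW : Conn s W := by
    intro X hXW hXne hXWne heq
    have hsplit : s (C ∩ X) + s (C \ X) = s C := by
      have hle := split_ge s hmono hsub W X C hXW hCW heq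
      have h := hsub (C ∩ X) (C \ X)
      have e1 : (C ∩ X) ∪ (C \ X) = C := by
        ext x
        simp only [Finset.mem_union, Finset.mem_inter, Finset.mem_sdiff]
        tauto
      have e2 : (C ∩ X) ∩ (C \ X) = ∅ := by
        ext x
        simp only [Finset.mem_inter, Finset.mem_sdiff, Finset.notMem_empty, iff_false]
        tauto
      rw [e1, e2, hs0] at h
      linarith
    by_cases h0 : C ∩ X = ∅
    · refine key (W \ X) Finset.sdiff_subset ?_ ?_ ?_
      · intro x hx
        refine Finset.mem_sdiff.mpr ⟨hCW hx, fun hxX => ?_⟩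
        have : x ∈ C ∩ X := Finset.mem_inter.mpr ⟨hx, hxX⟩
        rw [h0] at this
        exact Finset.notMem_empty x this
      · obtain ⟨x, hx⟩ := Finset.nonempty_iff_ne_empty.mpr hXne
        intro hEq
        have hxW : x ∈ W \ X := by rw [hEq]; exact hXW hx
        exact (Finset.mem_sdiff.mp hxW).2 hx
      · have e : W \ (W \ X) = X := by
          rw [Finset.sdiff_sdiff_self_left]
          exact Finset.inter_eq_right.mpr hXW
        rw [e]
        linarith
    · have hCsubX : C ⊆ X := by
        by_contra hnc
        have hCXneC : C ∩ X ≠ C := fun h => hnc (Finset.inter_eq_left.mp h)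
        have hne := hCconn (C ∩ X) Finset.inter_subset_left h0 hCXneC
        rw [Finset.sdiff_inter_self_left] at hne
        exact hne hsplit
      exact key X hXW hCsubX hXWne heq
  refine ⟨W, hCW, ?_, hWG, hconnW⟩
  intro hWC
  rw [hWC, Finset.sdiff_self, hs0] at hWlt
  linarith

/-- If `M` is connected and `K` is a component of `M/f`, then `M|(K ∪ {f})` is
connected. -/
theorem component_with_f_conn {α : Type*} [DecidableEq α]
    (E : Finset α) (r : Finset α → ℤ)
    (hr0 : r ∅ = 0)
    (hmono : ∀ X Y : Finset α, X ⊆ Y → r X ≤ r Y)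
    (hsub : ∀ X Y : Finset α, r (X ∪ Y) + r (X ∩ Y) ≤ r X + r Y)
    (hE : 2 ≤ E.card)
    (hconn : Conn r E)
    (f : α) (hf : f ∈ E)
    (K : Finset α) (hKE : K ⊆ E \ {f}) (hKne : K ≠ ∅)
    (hKconn : Conn (fun X => r (X ∪ {f}) - r {f}) K)
    (hKmax : ∀ W, K ⊆ W → W ⊆ E \ {f} →
        Conn (fun X => r (X ∪ {f}) - r {f}) W → W = K) :
    Conn r (K ∪ {f}) := by
  classical
  have hfK : f ∉ K := fun h => (Finset.mem_sdiff.mp (hKE h)).2 (Finset.mem_singleton_self f)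
  have hKE' : K ⊆ E := hKE.trans (Finset.sdiff_subset)
  set s : Finset α → ℤ := fun X => r (X ∪ {f}) - r {f} with hs
  have hs0 : s ∅ = 0 := by simp [hs]
  have hsmono : ∀ X Y : Finset α, X ⊆ Y → s X ≤ s Y := by
    intro X Y h
    simp only [hs]
    have := hmono (X ∪ {f}) (Y ∪ {f}) (Finset.union_subset_union_left h)
    linarith
  have hssub : ∀ X Y : Finset α, s (X ∪ Y) + s (X ∩ Y) ≤ s X + s Y := by
    intro X Y
    simp only [hs]
    have h := hsub (X ∪ {f}) (Y ∪ {f})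
    have e1 : (X ∪ {f}) ∪ (Y ∪ {f}) = (X ∪ Y) ∪ {f} := by
      ext x; simp only [Finset.mem_union, Finset.mem_singleton]; tauto
    have e2 : (X ∪ {f}) ∩ (Y ∪ {f}) = (X ∩ Y) ∪ {f} := by
      ext x; simp only [Finset.mem_union, Finset.mem_inter, Finset.mem_singleton]; tauto
    rw [e1, e2] at h
    linarith
  -- the component `K` is a full separator of `M/f`
  have hstar : r (K ∪ {f}) + r (E \ K) ≤ r E + r {f} := by
    by_contra hlt
    push_neg at hlt
    have eE : (E \ {f}) ∪ {f} = E := by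
      ext x
      simp only [Finset.mem_union, Finset.mem_sdiff, Finset.mem_singleton]
      constructor
      · rintro (⟨h, _⟩ | h)
        · exact h
        · rw [h]; exact hf
      · intro h
        by_cases hx : x = f
        · right; exact hx
        · left; exact ⟨h, hx⟩
    have eEK : ((E \ {f}) \ K) ∪ {f} = E \ K := by
      ext x
      simp only [Finset.mem_union, Finset.mem_sdiff, Finset.mem_singleton]
      constructor
      · rintro (⟨⟨h1, _⟩, h2⟩ | h)
        · exact ⟨h1, h2⟩
        · rw [h]; exact ⟨hf, hfK⟩
      · rintro ⟨h1, h2⟩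
        by_cases hx : x = f
        · right; exact hx
        · left; exact ⟨⟨h1, hx⟩, h2⟩
    have hgap : s (E \ {f}) < s K + s ((E \ {f}) \ K) := by
      simp only [hs]
      rw [eE, eEK]
      linarith
    obtain ⟨W, hCW, hWne, hWG, hWconn⟩ :=
      exists_conn_superset s hs0 hsmono hssub (E \ {f}) K hKE hKne hKconn hgap
    exact hWne (hKmax W hCW hWG hWconn)
  -- main argument, for a separating set not containing f
  have main : ∀ X, X ⊆ K → X ≠ ∅ → r X + r ((K ∪ {f}) \ X) = r (K ∪ {f}) → False := by
    intro X hXK hXne heq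
    have hXf : f ∉ X := fun h => hfK (hXK h)
    by_cases hXeqK : X = K
    · subst hXeqK
      have e : (X ∪ {f}) \ X = {f} := by
        ext x
        simp only [Finset.mem_sdiff, Finset.mem_union, Finset.mem_singleton]
        constructor
        · rintro ⟨h1 | h1, h2⟩
          · exact absurd h1 h2
          · exact h1
        · intro h
          rw [h]
          exact ⟨Or.inr rfl, hXf⟩
      rw [e] at heq
      have hsum := hsub X (E \ X)
      have eU : X ∪ (E \ X) = E := Finset.union_sdiff_of_subset hKE'
      have eI : X ∩ (E \ X) = ∅ := by
        ext x
        simp only [Finset.mem_inter, Finset.mem_sdiff, Finset.notMem_empty, iff_false]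
        tauto
      rw [eU, eI, hr0] at hsum
      have hXneE : X ≠ E := by
        intro h
        rw [h] at hXf
        exact hXf hf
      exact hconn X hKE' hXne hXneE (by linarith)
    · have e : (K ∪ {f}) \ X = (K \ X) ∪ {f} := by
        ext x
        simp only [Finset.mem_sdiff, Finset.mem_union, Finset.mem_singleton]
        constructor
        · rintro ⟨h1 | h1, h2⟩
          · left; exact ⟨h1, h2⟩
          · right; exact h1
        · rintro (⟨h1, h2⟩ | h1)
          · exact ⟨Or.inl h1, h2⟩
          · rw [h1]; exact ⟨Or.inr rfl, hXf⟩
      rw [e] at heq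
      have hne := hKconn X hXK hXne hXeqK
      simp only [hs] at hne
      have h1 := hsub (X ∪ {f}) ((K \ X) ∪ {f})
      have e1 : (X ∪ {f}) ∪ ((K \ X) ∪ {f}) = K ∪ {f} := by
        ext x
        simp only [Finset.mem_union, Finset.mem_sdiff, Finset.mem_singleton]
        constructor
        · rintro ((h | h) | (⟨h, _⟩ | h))
          · exact Or.inl (hXK h)
          · exact Or.inr h
          · exact Or.inl h
          · exact Or.inr h
        · rintro (h | h)
          · by_cases hx : x ∈ X
            · exact Or.inl (Or.inl hx)
            · exact Or.inr (Or.inl ⟨h, hx⟩)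
          · exact Or.inl (Or.inr h)
      have e2 : (X ∪ {f}) ∩ ((K \ X) ∪ {f}) = {f} := by
        ext x
        simp only [Finset.mem_inter, Finset.mem_union, Finset.mem_sdiff, Finset.mem_singleton]
        constructor
        · rintro ⟨h1 | h1, ⟨_, h2⟩ | h2⟩
          · exact absurd h1 h2
          · exact h2
          · exact h1
          · exact h2
        · intro h
          rw [h]
          exact ⟨Or.inr rfl, Or.inr rfl⟩
      rw [e1, e2] at h1
      have h2 := hsub X {f}
      have e3 : X ∩ {f} = ∅ := by
        ext x
        simp only [Finset.mem_inter, Finset.mem_singleton, Finset.notMem_empty, iff_false]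
        rintro ⟨h1, h2⟩
        rw [h2] at h1
        exact hXf h1
      rw [e3, hr0] at h2
      exact hne (by linarith)
  -- conclude
  intro X hX hXne hXF heq
  by_cases hfx : f ∈ X
  · have hX'K : (K ∪ {f}) \ X ⊆ K := by
      intro x hx
      obtain ⟨h1, h2⟩ := Finset.mem_sdiff.mp hx
      rcases Finset.mem_union.mp h1 with h | h
      · exact h
      · exact absurd (Finset.mem_singleton.mp h ▸ hfx) h2
    have hX'ne : (K ∪ {f}) \ X ≠ ∅ := by
      intro h
      exact hXF (Finset.Subset.antisymm hX (Finset.sdiff_eq_empty_iff_subset.mp h))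
    have e : (K ∪ {f}) \ ((K ∪ {f}) \ X) = X := by
      rw [Finset.sdiff_sdiff_self_left]
      exact Finset.inter_eq_right.mpr hX
    refine main ((K ∪ {f}) \ X) hX'K hX'ne ?_
    rw [e]
    linarith
  · have hXK : X ⊆ K := by
      intro x hx
      rcases Finset.mem_union.mp (hX hx) with h | h
      · exact h
      · exact absurd (Finset.mem_singleton.mp h ▸ hx) hfx
    exact main X hXK hXne heq
end
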